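/- arXiv:2407.19276 — 10 statements merged into one kernel-verified Lean document; each statement's English description precedes it below -/
import Mathlib

section
/- Let 𝔽 be ℝ or ℂ and n ≥ 1. Let T : 𝔽ⁿ → 𝔽ⁿ be a linear map, where 𝔽ⁿ is equipped with the ℓ₁-norm ‖x‖₁ = Σ_{j=1}^n |x_j|, and identify T with its matrix (t_{ij}) so that (Tx)_i = Σ_j t_{ij} x_j. Then T preserves TEA pairs (i.e., (Tx, Ty) is a TEA pair whenever (x, y) is a TEA pair) if and only if each row of T has at most one nonzero entry, i.e., for each i there is at most one j with t_{ij} ≠ 0. -/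
open scoped ENNReal

/-- Two vectors in a normed space form a *triangle equality attaining* (TEA) pair
if `‖x + y‖ = ‖x‖ + ‖y‖`. -/
def TEAPair {E : Type*} [NormedAddCommGroup E] (x y : E) : Prop :=
  ‖x + y‖ = ‖x‖ + ‖y‖

/-!
Since the `ℓ₁`-norm is a sum of coordinate norms and the triangle inequality holds in each
coordinate, `(x, y)` is a TEA pair exactly when `(xⱼ, yⱼ)` is a TEA pair for every `j`. So `T`
preserves TEA pairs iff every row functional `x ↦ ∑ⱼ tᵢⱼ xⱼ` sends coordinatewise TEA pairs to TEA
pairs of scalars. A row with a single nonzero entry `c` acts as multiplication by `c`, which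
preserves TEA pairs. If a row has two nonzero entries `tᵢⱼ, tᵢⱼ'`, the vectors `tᵢⱼ⁻¹ eⱼ` and
`-tᵢⱼ'⁻¹ eⱼ'` have disjoint supports, hence form a TEA pair, but are sent to `1` and `-1`.
-/

open Function Matrix

section TEAPair

variable {E : Type*} [NormedAddCommGroup E]

lemma TEAPair.zero_left (y : E) : TEAPair 0 y := by
  simp [TEAPair]

lemma TEAPair.zero_right (x : E) : TEAPair x 0 := by
  simp [TEAPair]

lemma not_teaPair_neg {x : E} (hx : x ≠ 0) : ¬ TEAPair x (-x) := by
  simpa [TEAPair, eq_comm (a := (0 : ℝ))] using hx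

lemma TEAPair.smul {𝕜 : Type*} [NormedField 𝕜] [NormedSpace 𝕜 E] {x y : E} (h : TEAPair x y)
    (c : 𝕜) : TEAPair (c • x) (c • y) := by
  rw [TEAPair, ← smul_add, norm_smul, norm_smul, norm_smul, h, mul_add]

end TEAPair

lemma teaPair_piLp_one_iff {ι : Type*} [Fintype ι] {β : ι → Type*}
    [∀ i, NormedAddCommGroup (β i)] (x y : PiLp 1 β) :
    TEAPair x y ↔ ∀ i, TEAPair (x i) (y i) := by
  simp only [TEAPair, PiLp.norm_eq_of_L1, PiLp.add_apply, ← Finset.sum_add_distrib]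
  rw [Finset.sum_eq_sum_iff_of_le fun i _ ↦ norm_add_le _ _]
  simp

section Row

variable {ι 𝕜 : Type*} [Fintype ι] [NormedField 𝕜] {r : ι → 𝕜}

lemma TEAPair.dotProduct_of_subsingleton_support (hr : (support r).Subsingleton)
    {x y : ι → 𝕜} (hxy : ∀ j, TEAPair (x j) (y j)) : TEAPair (r ⬝ᵥ x) (r ⬝ᵥ y) := by
  rcases hr.eq_empty_or_singleton with hr | ⟨j₀, hr⟩
  · simpa [support_eq_empty_iff.mp hr] using TEAPair.zero_left (0 : 𝕜)
  · have hsum (z : ι → 𝕜) : r ⬝ᵥ z = r j₀ * z j₀ :=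
      Finset.sum_eq_single j₀ (fun j _ hj ↦ by simp [notMem_support.mp (hr ▸ hj : j ∉ support r)])
        (by simp)
    rw [hsum, hsum]
    exact (hxy j₀).smul (r j₀)

lemma subsingleton_support_of_teaPair_dotProduct [DecidableEq ι]
    (h : ∀ x y : ι → 𝕜, (∀ j, TEAPair (x j) (y j)) → TEAPair (r ⬝ᵥ x) (r ⬝ᵥ y)) :
    (support r).Subsingleton := by
  intro j hj j' hj'
  by_contra hne
  have hdisjoint : ∀ k, TEAPair ((Pi.single j (r j)⁻¹ : ι → 𝕜) k) ((Pi.single j' (-(r j')⁻¹) : ι → 𝕜) k) := by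
    intro k
    by_cases hk : k = j
    · subst hk
      simpa [Pi.single_apply, hne] using TEAPair.zero_right _
    · simpa [Pi.single_apply, hk] using TEAPair.zero_left _
  have := h _ _ hdisjoint
  rw [dotProduct_single, dotProduct_single, mul_inv_cancel₀ hj, mul_neg,
    mul_inv_cancel₀ hj'] at this
  exact not_teaPair_neg one_ne_zero this

end Row

theorem l1_TEA_preserver_iff_rows_general {𝕜 : Type*} [RCLike 𝕜] {n : ℕ}
    (T : PiLp 1 (fun _ : Fin n => 𝕜) →ₗ[𝕜] PiLp 1 (fun _ : Fin n => 𝕜))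
    (t : Matrix (Fin n) (Fin n) 𝕜)
    (ht : ∀ (x : PiLp 1 (fun _ : Fin n => 𝕜)) (i : Fin n), T x i = ∑ j, t i j * x j) :
    (∀ x y : PiLp 1 (fun _ : Fin n => 𝕜), TEAPair x y → TEAPair (T x) (T y)) ↔
      ∀ i j j' : Fin n, t i j ≠ 0 → t i j' ≠ 0 → j = j' := by
  have hrow (x : PiLp 1 (fun _ : Fin n => 𝕜)) (i : Fin n) : T x i = t i ⬝ᵥ x := ht x i
  calc (∀ x y : PiLp 1 (fun _ : Fin n => 𝕜), TEAPair x y → TEAPair (T x) (T y))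
      ↔ ∀ i, ∀ x y : Fin n → 𝕜, (∀ j, TEAPair (x j) (y j)) →
          TEAPair (t i ⬝ᵥ x) (t i ⬝ᵥ y) := by
        simp only [teaPair_piLp_one_iff, hrow]
        exact ⟨fun h i x y hxy ↦ h (WithLp.toLp 1 x) (WithLp.toLp 1 y) hxy i,
          fun h x y hxy i ↦ h i x y hxy⟩
    _ ↔ ∀ i, (support (t i)).Subsingleton :=
        forall_congr' fun _ ↦ ⟨subsingleton_support_of_teaPair_dotProduct,
          TEAPair.dotProduct_of_subsingleton_support⟩
    _ ↔ ∀ i j j' : Fin n, t i j ≠ 0 → t i j' ≠ 0 → j = j' :=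
        forall_congr' fun _ ↦ ⟨fun h j j' hj hj' ↦ h hj hj', fun h j hj j' hj' ↦ h j j' hj hj'⟩

/-- Let `𝔽` be `ℝ` or `ℂ` and `n ≥ 1`.  A linear map `T` on `𝔽ⁿ` with the `ℓ₁`-norm,
identified with its matrix `t` (so that `(Tx)ᵢ = ∑ⱼ t i j * x j`), preserves TEA pairs
if and only if each row of `t` has at most one nonzero entry. -/
theorem l1_TEA_preserver_iff_rows {𝕜 : Type*} [RCLike 𝕜] {n : ℕ} (hn : 1 ≤ n)
    (T : PiLp 1 (fun _ : Fin n => 𝕜) →ₗ[𝕜] PiLp 1 (fun _ : Fin n => 𝕜))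
    (t : Matrix (Fin n) (Fin n) 𝕜)
    (ht : ∀ (x : PiLp 1 (fun _ : Fin n => 𝕜)) (i : Fin n), T x i = ∑ j, t i j * x j) :
    (∀ x y : PiLp 1 (fun _ : Fin n => 𝕜), TEAPair x y → TEAPair (T x) (T y)) ↔
      ∀ i j j' : Fin n, t i j ≠ 0 → t i j' ≠ 0 → j = j' :=
  l1_TEA_preserver_iff_rows_general T t ht
end

section
/- Let 𝔽 be ℝ or ℂ and n ≥ 1. Let T : 𝔽ⁿ → 𝔽ⁿ be a linear map, where 𝔽ⁿ is equipped with the ℓ₁-norm, and identify T with its matrix (t_{ij}). Then T preserves parallel pairs (i.e., (Tx, Ty) is a parallel pair whenever (x, y) is a parallel pair) if and only if each row of T has at most one nonzero entry, or T = v uᵗ for some column vectors u, v ∈ 𝔽ⁿ (i.e., Tx = (uᵗx) v for all x). -/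
open scoped ENNReal

/-- Two vectors in a normed space over `𝕜` form a *parallel pair* if
`‖x + μ • y‖ = ‖x‖ + ‖y‖` for some scalar `μ` with `|μ| = 1`. -/
def ParallelPair (𝕜 : Type*) {E : Type*} [RCLike 𝕜] [NormedAddCommGroup E] [NormedSpace 𝕜 E]
    (x y : E) : Prop :=
  ∃ μ : 𝕜, ‖μ‖ = 1 ∧ ‖x + μ • y‖ = ‖x‖ + ‖y‖

/-!
In `ℓ¹`, `(x, y)` is a parallel pair iff a single unimodular `μ` puts every `x i` and `μ * y i`
on a common ray. For a preserver `T` the phase `μ` cancels from two coordinates `i, j`, leaving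
`SameRay ℝ ((T x) i * (T y) j) ((T y) i * (T x) j)` whenever `(T y) i, (T y) j ≠ 0`.
Testing this on vectors supported on two or three coordinates shows that once a row `i₀` of `t`
has two nonzero entries, all `2 × 2` minors through row `i₀` vanish and every column vanishing
at `i₀` vanishes identically, so `t` has rank one. Conversely, a matrix with at most one nonzero
entry per row keeps each coordinate pair on a ray, and a rank-one map sends any two vectors to
multiples of one vector, which always form a parallel pair.
-/

section

variable {𝕜 : Type*} [RCLike 𝕜]

def PreservesParallelPairs (𝕜 : Type*) {E F : Type*} [RCLike 𝕜] [NormedAddCommGroup E]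
    [NormedSpace 𝕜 E] [NormedAddCommGroup F] [NormedSpace 𝕜 F] (T : E → F) : Prop :=
  ∀ x y, ParallelPair 𝕜 x y → ParallelPair 𝕜 (T x) (T y)

theorem RCLike.exists_norm_eq_one_sameRay_mul (a b : 𝕜) :
    ∃ μ : 𝕜, ‖μ‖ = 1 ∧ SameRay ℝ a (μ * b) := by
  rcases eq_or_ne a 0 with rfl | ha
  · exact ⟨1, norm_one, SameRay.zero_left _⟩
  rcases eq_or_ne b 0 with rfl | hb
  · exact ⟨1, norm_one, by simp⟩
  refine ⟨(‖b‖ / ‖a‖ : ℝ) • (a / b), ?_, ?_⟩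
  · rw [norm_smul, Real.norm_of_nonneg (by positivity), norm_div]
    field_simp
  · rw [smul_mul_assoc, div_mul_cancel₀ a hb]
    exact SameRay.sameRay_nonneg_smul_right a (by positivity)

theorem parallelPair_smul_smul {E : Type*} [NormedAddCommGroup E] [NormedSpace 𝕜 E]
    (a b : 𝕜) (v : E) : ParallelPair 𝕜 (a • v) (b • v) := by
  obtain ⟨μ, hμ, hab⟩ := RCLike.exists_norm_eq_one_sameRay_mul a b
  refine ⟨μ, hμ, ?_⟩
  rw [smul_smul, ← add_smul, norm_smul, norm_smul, norm_smul, hab.norm_add, norm_mul, hμ,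
    one_mul, add_mul]

theorem PreservesParallelPairs.of_eq_smul {E F : Type*} [NormedAddCommGroup E]
    [NormedSpace 𝕜 E] [NormedAddCommGroup F] [NormedSpace 𝕜 F] {T : E → F} (f : E → 𝕜) (v : F)
    (h : ∀ x, T x = f x • v) : PreservesParallelPairs 𝕜 T := fun x y _ => by
  rw [h, h]
  exact parallelPair_smul_smul _ _ v

theorem SameRay.mul_mul_of_mul {a b c d μ : 𝕜} (h₁ : SameRay ℝ a (μ * b))
    (h₂ : SameRay ℝ c (μ * d)) (hμ : μ ≠ 0) (hb : b ≠ 0) (hd : d ≠ 0) :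
    SameRay ℝ (a * d) (b * c) := by
  have h₁' : SameRay ℝ (μ * d * a) (μ * b * (μ * d)) := by
    simpa only [smul_eq_mul, mul_comm, mul_left_comm] using h₁.smul (μ * d)
  have h₂' : SameRay ℝ (μ * b * (μ * d)) (μ * b * c) := by
    simpa only [smul_eq_mul] using (h₂.smul (μ * b)).symm
  have := (h₁'.trans h₂' fun h => by simp_all).smul μ⁻¹
  simp only [smul_eq_mul] at this
  convert this using 1 <;> field_simp

theorem eq_of_forall_sameRay_add_mul {c u w : 𝕜} (hc : c ≠ 0)
    (h : ∀ β : 𝕜, SameRay ℝ (c + β * u) (c + β * w)) : u = w := by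
  by_contra huw
  obtain ⟨s, hs, hsw⟩ : ∃ s : ℝ, 0 < s ∧ u + s * w ≠ 0 := by
    by_cases h₁ : u + w = 0
    · refine ⟨2, two_pos, fun h₂ => huw ?_⟩
      push_cast at h₂
      linear_combination 3 * h₁ - 2 * h₂
    · exact ⟨1, one_pos, by simpa using h₁⟩
  have hne : c * (u - w) / (u + s * w) ≠ 0 := by
    simp [hc, sub_ne_zero.2 huw, hsw]
  have key := h (-(1 + s) * c / (u + s * w))
  rw [show c + -(1 + s) * c / (u + s * w) * u = (-s) • (c * (u - w) / (u + s * w)) by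
      rw [RCLike.real_smul_eq_coe_mul]; push_cast; field_simp; ring,
    show c + -(1 + s) * c / (u + s * w) * w = c * (u - w) / (u + s * w) by field_simp; ring,
    sameRay_smul_left_iff_of_ne hne (by linarith)] at key
  linarith

section L1

variable {ι : Type*} [Fintype ι]

theorem parallelPair_iff_exists_forall_sameRay {x y : PiLp 1 fun _ : ι => 𝕜} :
    ParallelPair 𝕜 x y ↔ ∃ μ : 𝕜, ‖μ‖ = 1 ∧ ∀ i, SameRay ℝ (x i) (μ * y i) := by
  refine exists_congr fun μ => and_congr_right fun hμ => ?_
  have hy : ∀ i, ‖y i‖ = ‖μ * y i‖ := by simp [hμ]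
  simp only [PiLp.norm_eq_of_L1, PiLp.add_apply, PiLp.smul_apply, smul_eq_mul, hy,
    ← Finset.sum_add_distrib, sameRay_iff_norm_add]
  rw [Finset.sum_eq_sum_iff_of_le fun i _ => norm_add_le (x i) (μ * y i)]
  simp

theorem parallelPair_of_forall_sameRay {x y : PiLp 1 fun _ : ι => 𝕜}
    (h : ∀ i, SameRay ℝ (x i) (y i)) : ParallelPair 𝕜 x y :=
  parallelPair_iff_exists_forall_sameRay.2 ⟨1, norm_one, by simpa using h⟩

theorem ParallelPair.sameRay_mul_mul {x y : PiLp 1 fun _ : ι => 𝕜} (h : ParallelPair 𝕜 x y)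
    {i j : ι} (hi : y i ≠ 0) (hj : y j ≠ 0) : SameRay ℝ (x i * y j) (y i * x j) := by
  obtain ⟨μ, hμ, hxy⟩ := parallelPair_iff_exists_forall_sameRay.1 h
  exact (hxy i).mul_mul_of_mul (hxy j) (by rintro rfl; simp at hμ) hi hj

end L1

section Matrix

variable {ι κ : Type*} [Fintype ι]
  {T : (PiLp 1 fun _ : ι => 𝕜) → PiLp 1 fun _ : κ => 𝕜} {t : Matrix κ ι 𝕜}

theorem apply_single_add_single [DecidableEq ι] (ht : ∀ x i, T x i = ∑ j, t i j * x j) (p q : ι) (a b : 𝕜)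
    (i : κ) : T (PiLp.single 1 p a + PiLp.single 1 q b) i = t i p * a + t i q * b := by
  simp [ht, PiLp.single_apply, mul_add, Finset.sum_add_distrib]

variable [Fintype κ]

theorem preservesParallelPairs_of_row_support_subsingleton
    (ht : ∀ x i, T x i = ∑ j, t i j * x j) (hrow : ∀ i j j', t i j ≠ 0 → t i j' ≠ 0 → j = j') :
    PreservesParallelPairs 𝕜 T := by
  intro x y hxy
  obtain ⟨μ, hμ, hxy⟩ := parallelPair_iff_exists_forall_sameRay.1 hxy
  refine parallelPair_iff_exists_forall_sameRay.2 ⟨μ, hμ, fun i => ?_⟩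
  by_cases hi : ∃ j, t i j ≠ 0
  · obtain ⟨j, hj⟩ := hi
    have hsum (z : PiLp 1 fun _ : ι => 𝕜) : T z i = t i j * z j := by
      rw [ht]
      refine Finset.sum_eq_single j (fun j' _ hj' => ?_) (by simp)
      rw [not_ne_iff.1 (mt (hrow i j' j · hj) hj'), zero_mul]
    rw [hsum, hsum, mul_left_comm]
    exact (hxy j).smul (t i j)
  · simp [ht, not_exists_not.1 hi]

variable [DecidableEq ι]

theorem PreservesParallelPairs.mul_eq_mul_of_col_ne_zero (hT : PreservesParallelPairs 𝕜 T)
    (ht : ∀ x i, T x i = ∑ j, t i j * x j) {i₀ i : κ} {p q : ι} (hpq : p ≠ q)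
    (h₀ : t i₀ q ≠ 0) (h : t i q ≠ 0) : t i₀ p * t i q = t i₀ q * t i p := by
  refine eq_of_forall_sameRay_add_mul (mul_ne_zero h₀ h) fun β => ?_
  have hxy : ParallelPair 𝕜 (PiLp.single 1 p β + PiLp.single 1 q 1 : PiLp 1 fun _ : ι => 𝕜)
      (PiLp.single 1 p 0 + PiLp.single 1 q 1) := by
    refine parallelPair_of_forall_sameRay fun j => ?_
    simp only [PiLp.add_apply, PiLp.single_apply]
    split_ifs <;> simp_all [SameRay.rfl]
  have := (hT _ _ hxy).sameRay_mul_mul (i := i₀) (j := i)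
    (by simpa [apply_single_add_single ht]) (by simpa [apply_single_add_single ht])
  simp only [apply_single_add_single ht] at this
  convert this using 1 <;> ring

theorem PreservesParallelPairs.col_eq_zero_of_row_eq_zero (hT : PreservesParallelPairs 𝕜 T)
    (ht : ∀ x i, T x i = ∑ j, t i j * x j) {i₀ : κ} {p q k : ι} (hpq : p ≠ q)
    (hp : t i₀ p ≠ 0) (hq : t i₀ q ≠ 0) (hk : t i₀ k = 0) (i : κ) : t i k = 0 := by
  have hkp : k ≠ p := by rintro rfl; exact hp hk
  have hkq : k ≠ q := by rintro rfl; exact hq hk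
  by_cases hip : t i p = 0
  · by_cases hiq : t i q = 0
    · by_contra hik
      have hxy : ParallelPair 𝕜
          (PiLp.single 1 p (-t i₀ q / t i₀ p) + PiLp.single 1 k 1 : PiLp 1 fun _ : ι => 𝕜)
          (PiLp.single 1 q 1 + PiLp.single 1 k 1) := by
        refine parallelPair_of_forall_sameRay fun j => ?_
        simp only [PiLp.add_apply, PiLp.single_apply]
        split_ifs <;> simp_all [SameRay.rfl]
      have := (hT _ _ hxy).sameRay_mul_mul (i := i₀) (j := i)
        (by simpa [apply_single_add_single ht, hk]) (by simpa [apply_single_add_single ht, hiq])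
      simp only [apply_single_add_single ht, hk, hip, hiq] at this
      have key : SameRay ℝ (t i₀ q * t i k) (-(t i₀ q * t i k)) := by
        convert this.symm using 1 <;> field_simp <;> ring
      exact mul_ne_zero hq hik (eq_zero_of_sameRay_self_neg key)
    · simpa [hk, hq] using hT.mul_eq_mul_of_col_ne_zero ht hkq hq hiq
  · simpa [hk, hp] using hT.mul_eq_mul_of_col_ne_zero ht hkp hp hip

theorem PreservesParallelPairs.mul_eq_mul_of_row_ne_zero (hT : PreservesParallelPairs 𝕜 T)
    (ht : ∀ x i, T x i = ∑ j, t i j * x j) {i₀ : κ} {p q : ι} (hpq : p ≠ q)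
    (hp : t i₀ p ≠ 0) (hq : t i₀ q ≠ 0) (i : κ) (j : ι) : t i₀ p * t i j = t i₀ j * t i p := by
  by_cases hj : t i₀ j = 0
  · rw [hT.col_eq_zero_of_row_eq_zero ht hpq hp hq hj i, hj]; ring
  rcases eq_or_ne j p with rfl | hjp
  · ring
  by_cases hij : t i j = 0
  · by_cases hip : t i p = 0
    · rw [hij, hip]; ring
    · exact (hT.mul_eq_mul_of_col_ne_zero ht hjp hp hip).symm
  · exact hT.mul_eq_mul_of_col_ne_zero ht hjp.symm hj hij

end Matrix

end

theorem l1_parallel_preserver_iff_general {𝕜 : Type*} [RCLike 𝕜] {n : ℕ}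
    (T : PiLp 1 (fun _ : Fin n => 𝕜) →ₗ[𝕜] PiLp 1 (fun _ : Fin n => 𝕜))
    (t : Matrix (Fin n) (Fin n) 𝕜)
    (ht : ∀ (x : PiLp 1 (fun _ : Fin n => 𝕜)) (i : Fin n), T x i = ∑ j, t i j * x j) :
    (∀ x y : PiLp 1 (fun _ : Fin n => 𝕜),
        ParallelPair 𝕜 x y → ParallelPair 𝕜 (T x) (T y)) ↔
      ((∀ i j j' : Fin n, t i j ≠ 0 → t i j' ≠ 0 → j = j') ∨
        ∃ u v : Fin n → 𝕜, ∀ (x : PiLp 1 (fun _ : Fin n => 𝕜)) (i : Fin n),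
          T x i = (∑ j, u j * x j) * v i) := by
  change PreservesParallelPairs 𝕜 T ↔ _
  refine ⟨fun hT => or_iff_not_imp_left.2 fun hrow => ?_, ?_⟩
  · obtain ⟨i₀, p, q, hp, hq, hpq⟩ : ∃ i₀ p q, t i₀ p ≠ 0 ∧ t i₀ q ≠ 0 ∧ p ≠ q := by
      simpa using hrow
    refine ⟨fun j => t i₀ j / t i₀ p, fun i => t i p, fun x i => ?_⟩
    rw [ht, Finset.sum_mul]
    refine Finset.sum_congr rfl fun j _ => ?_
    have := hT.mul_eq_mul_of_row_ne_zero ht hpq hp hq i j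
    field_simp
    linear_combination x j * this
  · rintro (hrow | ⟨u, v, huv⟩)
    · exact preservesParallelPairs_of_row_support_subsingleton ht hrow
    · refine PreservesParallelPairs.of_eq_smul (fun x => ∑ j, u j * x j) (WithLp.toLp 1 v)
        fun x => ?_
      ext i
      simp [huv]

/-- Let `𝔽` be `ℝ` or `ℂ` and `n ≥ 1`.  A linear map `T` on `𝔽ⁿ` with the `ℓ₁`-norm,
identified with its matrix `t`, preserves parallel pairs if and only if each row of `t`
has at most one nonzero entry, or `T = v uᵗ` for some column vectors `u, v ∈ 𝔽ⁿ`
(i.e. `Tx = (uᵗx) • v` for all `x`). -/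
theorem l1_parallel_preserver_iff {𝕜 : Type*} [RCLike 𝕜] {n : ℕ} (hn : 1 ≤ n)
    (T : PiLp 1 (fun _ : Fin n => 𝕜) →ₗ[𝕜] PiLp 1 (fun _ : Fin n => 𝕜))
    (t : Matrix (Fin n) (Fin n) 𝕜)
    (ht : ∀ (x : PiLp 1 (fun _ : Fin n => 𝕜)) (i : Fin n), T x i = ∑ j, t i j * x j) :
    (∀ x y : PiLp 1 (fun _ : Fin n => 𝕜),
        ParallelPair 𝕜 x y → ParallelPair 𝕜 (T x) (T y)) ↔
      ((∀ i j j' : Fin n, t i j ≠ 0 → t i j' ≠ 0 → j = j') ∨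
        ∃ u v : Fin n → 𝕜, ∀ (x : PiLp 1 (fun _ : Fin n => 𝕜)) (i : Fin n),
          T x i = (∑ j, u j * x j) * v i) :=
  l1_parallel_preserver_iff_general T t ht
end

section
/- Let 𝔽 be ℝ or ℂ and let x = (x_1, …, x_n)ᵗ, y = (y_1, …, y_n)ᵗ ∈ 𝔽ⁿ. Then x and y form a parallel pair with respect to the ℓ₁-norm if and only if there is a scalar μ ∈ 𝔽 with |μ| = 1 such that μ · conj(x_k) · y_k is a nonnegative real number for all k = 1, …, n; and x and y form a TEA pair with respect to the ℓ₁-norm if and only if conj(x_k) · y_k is a nonnegative real number for all k = 1, …, n. -/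
open scoped ENNReal

/-- A scalar `z ∈ 𝕜` is a nonnegative real number. -/
def IsNonnegReal {𝕜 : Type*} [RCLike 𝕜] (z : 𝕜) : Prop :=
  ∃ r : ℝ, 0 ≤ r ∧ z = (r : 𝕜)

open RCLike

/-- Triangle equality for scalars in an `RCLike` field is equivalent to `conj a * b ≥ 0`. -/
lemma key_scalar {𝕜 : Type*} [RCLike 𝕜] (a b : 𝕜) :
    ‖a + b‖ = ‖a‖ + ‖b‖ ↔ ∃ r : ℝ, 0 ≤ r ∧ (starRingEnd 𝕜) a * b = (r : 𝕜) := by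
  constructor
  · intro h
    set z : 𝕜 := (starRingEnd 𝕜) a * b with hz
    have hnorm : ‖z‖ = ‖a‖ * ‖b‖ := by rw [hz, norm_mul, norm_conj]
    have expand : (‖a + b‖ : ℝ) ^ 2 = ‖a‖ ^ 2 + 2 * re z + ‖b‖ ^ 2 := by
      have e1 : ((‖a + b‖ ^ 2 : ℝ) : 𝕜) = (a + b) * (starRingEnd 𝕜) (a + b) := by
        rw [RCLike.mul_conj]; norm_cast
      have e2 : (a + b) * (starRingEnd 𝕜) (a + b)
          = ((‖a‖ ^ 2 : ℝ) : 𝕜) + ((‖b‖ ^ 2 : ℝ) : 𝕜) + (z + (starRingEnd 𝕜) z) := by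
        rw [map_add, add_mul, mul_add, mul_add, RCLike.mul_conj, RCLike.mul_conj, hz]
        have e3 : a * (starRingEnd 𝕜) b = (starRingEnd 𝕜) ((starRingEnd 𝕜) a * b) := by
          rw [map_mul, RCLike.conj_conj, mul_comm]
        rw [e3]; push_cast; ring
      have := congrArg re (e1.trans e2)
      simp only [map_add, RCLike.ofReal_re, RCLike.conj_re] at this
      linarith
    have hre : re z = ‖a‖ * ‖b‖ := by
      have hsq : (‖a + b‖ : ℝ) ^ 2 = (‖a‖ + ‖b‖) ^ 2 := by rw [h]
      nlinarith [expand]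
    have hre' : re z = ‖z‖ := by rw [hre, hnorm]
    have him : im z = 0 := by
      have h1 : ‖z‖ ^ 2 = re z * re z + im z * im z := by
        rw [← RCLike.normSq_eq_def', RCLike.normSq_apply]
      have : im z * im z = 0 := by nlinarith
      exact mul_self_eq_zero.mp this
    exact ⟨‖z‖, norm_nonneg z, by apply RCLike.ext <;> simp [← hre', him]⟩
  · rintro ⟨r, hr, hab⟩
    rcases eq_or_ne a 0 with ha | ha
    · simp [ha]
    · have hb : b = (r / ‖a‖ ^ 2 : ℝ) • a := by
        have h1 : a * ((starRingEnd 𝕜) a * b) = a * (r : 𝕜) := by rw [hab]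
        rw [← mul_assoc, RCLike.mul_conj] at h1
        have hna : ((‖a‖ ^ 2 : ℝ) : 𝕜) ≠ 0 := by
          simp [pow_eq_zero_iff, ha]
        rw [RCLike.real_smul_eq_coe_mul]
        push_cast at hna ⊢
        rw [div_mul_eq_mul_div, eq_div_iff hna, mul_comm b, h1]; ring
      have hray : SameRay ℝ a b := by
        rw [hb]
        exact SameRay.sameRay_nonneg_smul_right a (by positivity)
      exact hray.norm_add

lemma l1_norm_eq {𝕜 : Type*} [RCLike 𝕜] {n : ℕ} (x : PiLp 1 (fun _ : Fin n => 𝕜)) :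
    ‖x‖ = ∑ k, ‖x k‖ := by
  rw [PiLp.norm_eq_sum (by norm_num)]
  simp

lemma tea_iff_scalar {𝕜 : Type*} [RCLike 𝕜] {n : ℕ} (x y : PiLp 1 (fun _ : Fin n => 𝕜)) :
    TEAPair x y ↔ ∀ k : Fin n, ‖x k + y k‖ = ‖x k‖ + ‖y k‖ := by
  unfold TEAPair
  rw [l1_norm_eq, l1_norm_eq, l1_norm_eq, ← Finset.sum_add_distrib]
  have hle : ∀ k ∈ Finset.univ, ‖(x + y) k‖ ≤ ‖x k‖ + ‖y k‖ := fun k _ => norm_add_le _ _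
  constructor
  · intro h k
    exact (Finset.sum_eq_sum_iff_of_le hle).mp h k (Finset.mem_univ k)
  · intro h
    exact Finset.sum_congr rfl fun k _ => h k

lemma tea_iff_nonneg {𝕜 : Type*} [RCLike 𝕜] {n : ℕ} (x y : PiLp 1 (fun _ : Fin n => 𝕜)) :
    TEAPair x y ↔ ∀ k : Fin n, IsNonnegReal ((starRingEnd 𝕜) (x k) * y k) := by
  rw [tea_iff_scalar]
  exact forall_congr' fun k => key_scalar (x k) (y k)

/-- For `x, y ∈ 𝔽ⁿ` (`𝔽 = ℝ` or `ℂ`) with the `ℓ₁`-norm: `x, y` are parallel iff there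
is a unimodular scalar `μ` with `μ * conj(xₖ) * yₖ ≥ 0` for all `k`; and `x, y` form a
TEA pair iff `conj(xₖ) * yₖ ≥ 0` for all `k`. -/
theorem l1_parallel_TEA_characterization {𝕜 : Type*} [RCLike 𝕜] {n : ℕ}
    (x y : PiLp 1 (fun _ : Fin n => 𝕜)) :
    (ParallelPair 𝕜 x y ↔
      ∃ μ : 𝕜, ‖μ‖ = 1 ∧ ∀ k : Fin n, IsNonnegReal (μ * (starRingEnd 𝕜) (x k) * y k)) ∧
    (TEAPair x y ↔ ∀ k : Fin n, IsNonnegReal ((starRingEnd 𝕜) (x k) * y k)) := by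
  constructor
  · unfold ParallelPair
    apply exists_congr
    intro μ
    apply and_congr_right
    intro hμ
    have hnorm : ‖μ • y‖ = ‖y‖ := by rw [norm_smul, hμ, one_mul]
    have : ‖x + μ • y‖ = ‖x‖ + ‖y‖ ↔ TEAPair x (μ • y) := by
      unfold TEAPair; rw [hnorm]
    rw [this, tea_iff_nonneg]
    apply forall_congr'
    intro k
    have hk : (μ • y) k = μ * y k := rfl
    rw [hk]
    constructor
    · rintro ⟨r, hr, h⟩
      exact ⟨r, hr, by rw [← h]; ring⟩
    · rintro ⟨r, hr, h⟩
      exact ⟨r, hr, by rw [← h]; ring⟩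
  · exact tea_iff_nonneg x y
end

section
/- Let 𝔽 be ℝ or ℂ. If V is a linear subspace of 𝔽ⁿ such that every two elements of V form a parallel pair with respect to the ℓ∞-norm, then V has dimension at most 1. -/
/-!
Call a coordinate `j` a peak of `x` if `‖x j‖ = ‖x‖`. If `x + μ • y` peaks at `j`, the
equality `‖x + μ • y‖ = ‖x‖ + ‖y‖` forces both `x` and `y` to peak at `j`; so in a pairwise
parallel subspace `V` any two vectors share a peak. Take `x ≠ 0` in `V` with fewest peaks and
`w ∈ V` vanishing at one peak `k` of `x`. Small perturbations `x + t • w` have no new peaks,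
hence by minimality exactly the peaks of `x`, and their norm is `‖x k‖`; so `|x j + t w j|` is
constant in `t` near `0` for every peak `j`, which forces `w j = 0`. Since `w` must peak
somewhere on the peaks of `x`, `w = 0`. Thus `V = 𝕜 ∙ x`.
-/

open scoped ENNReal

open Filter Topology

section PeakCoords

variable {ι E : Type*} [Fintype ι] [SeminormedAddCommGroup E]

noncomputable def peakCoords (x : ι → E) : Finset ι := {j | ‖x j‖ = ‖x‖}

theorem mem_peakCoords {x : ι → E} {j : ι} : j ∈ peakCoords x ↔ ‖x j‖ = ‖x‖ := by
  simp [peakCoords]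

theorem peakCoords_nonempty [Nonempty ι] (x : ι → E) : (peakCoords x).Nonempty := by
  obtain ⟨j, -, hj⟩ := Finset.univ.exists_mem_eq_sup Finset.univ_nonempty (‖x ·‖₊)
  exact ⟨j, mem_peakCoords.2 (by rw [Pi.norm_def, hj]; rfl)⟩

theorem eventually_peakCoords_subset (x : ι → E) : ∀ᶠ y in 𝓝 x, peakCoords y ⊆ peakCoords x := by
  have : ∀ j ∉ peakCoords x, ∀ᶠ y in 𝓝 x, ‖y j‖ < ‖y‖ := fun j hj =>
    ((continuous_apply j).norm.tendsto x).eventually_lt (continuous_norm.tendsto x)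
      (lt_of_le_of_ne (norm_le_pi_norm x j) (mt mem_peakCoords.2 hj))
  filter_upwards [eventually_all.2 fun j => eventually_imp_distrib_left.2 (this j)] with y hy j hj
  by_contra hjx
  exact (hy j hjx).ne (mem_peakCoords.1 hj)

end PeakCoords

theorem apply_ne_zero_of_mem_peakCoords {ι E : Type*} [Fintype ι] [NormedAddCommGroup E]
    {x : ι → E} (hx : x ≠ 0) {k : ι} (hk : k ∈ peakCoords x) : x k ≠ 0 :=
  norm_pos_iff.1 (mem_peakCoords.1 hk ▸ norm_pos_iff.2 hx)

theorem ParallelPair.exists_mem_peakCoords {𝕜 ι E : Type*} [RCLike 𝕜] [Fintype ι] [Nonempty ι]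
    [NormedAddCommGroup E] [NormedSpace 𝕜 E] {x y : ι → E} (h : ParallelPair 𝕜 x y) :
    ∃ j, j ∈ peakCoords x ∧ j ∈ peakCoords y := by
  obtain ⟨μ, hμ, hxy⟩ := h
  obtain ⟨j, hj⟩ := peakCoords_nonempty (x + μ • y)
  have hx := norm_le_pi_norm x j
  have hy := norm_le_pi_norm y j
  have : ‖x‖ + ‖y‖ ≤ ‖x j‖ + ‖y j‖ := calc
    ‖x‖ + ‖y‖ = ‖x j + μ • y j‖ := by rw [← hxy, ← mem_peakCoords.1 hj]; rfl
    _ ≤ ‖x j‖ + ‖y j‖ := by rw [← one_mul ‖y j‖, ← hμ, ← norm_smul]; exact norm_add_le _ _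
  exact ⟨j, mem_peakCoords.2 (by linarith), mem_peakCoords.2 (by linarith)⟩

theorem eq_zero_of_norm_add_eq_of_norm_sub_eq {𝕜 F : Type*} [RCLike 𝕜] [NormedAddCommGroup F]
    [InnerProductSpace 𝕜 F] {a b : F} (hadd : ‖a + b‖ = ‖a‖) (hsub : ‖a - b‖ = ‖a‖) : b = 0 := by
  have := parallelogram_law_with_norm 𝕜 a b
  rw [hadd, hsub] at this
  exact norm_eq_zero.1 (pow_eq_zero_iff two_ne_zero |>.1 (by linarith))

theorem eq_zero_of_eventually_norm_add_mul_eq {𝕜 : Type*} [RCLike 𝕜] {a b : 𝕜}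
    (h : ∀ᶠ t in 𝓝 (0 : 𝕜), ‖a + t * b‖ = ‖a‖) : b = 0 := by
  have hneg : ∀ᶠ t in 𝓝 (0 : 𝕜), ‖a + -t * b‖ = ‖a‖ :=
    (neg_zero (G := 𝕜) ▸ continuous_neg.tendsto (0 : 𝕜)).eventually h
  obtain ⟨t, ⟨hpos, hneg⟩, ht⟩ := ((h.and hneg).filter_mono nhdsWithin_le_nhds |>.and
    self_mem_nhdsWithin).exists (f := 𝓝[≠] (0 : 𝕜))
  have := eq_zero_of_norm_add_eq_of_norm_sub_eq (𝕜 := 𝕜) hpos (by rwa [sub_eq_add_neg, ← neg_mul])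
  exact (mul_eq_zero.1 this).resolve_left ht

section MinimalPeakCoords

open Finset

variable {𝕜 ι : Type*} [RCLike 𝕜] [Fintype ι] {V : Submodule 𝕜 (ι → 𝕜)} {x : ι → 𝕜}

theorem apply_eq_zero_of_minimalFor_card_peakCoords
    (hx : MinimalFor (fun v => v ∈ V ∧ v ≠ 0) (fun v => #(peakCoords v)) x)
    {w : ι → 𝕜} (hw : w ∈ V) {k : ι} (hk : k ∈ peakCoords x) (hwk : w k = 0)
    {j : ι} (hj : j ∈ peakCoords x) : w j = 0 := by
  have hxk := apply_ne_zero_of_mem_peakCoords hx.1.2 hk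
  have hlim : Tendsto (fun t : 𝕜 => x + t • w) (𝓝 0) (𝓝 x) := by
    simpa using ((continuous_id.smul continuous_const).const_add x).tendsto (0 : 𝕜)
  refine eq_zero_of_eventually_norm_add_mul_eq (a := x j) ?_
  filter_upwards [hlim.eventually (eventually_peakCoords_subset x)] with t hsub
  have hvk : (x + t • w) k = x k := by simp [hwk]
  have hv : x + t • w ∈ V ∧ x + t • w ≠ 0 :=
    ⟨V.add_mem hx.1.1 (V.smul_mem t hw), fun h => hxk (by rw [← hvk, h, Pi.zero_apply])⟩
  have heq : peakCoords (x + t • w) = peakCoords x :=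
    eq_of_subset_of_card_le hsub (hx.2 hv (card_le_card hsub))
  calc ‖x j + t * w j‖ = ‖x + t • w‖ := mem_peakCoords.1 (heq ▸ hj)
    _ = ‖x k‖ := by rw [← mem_peakCoords.1 (heq ▸ hk), hvk]
    _ = ‖x j‖ := by rw [mem_peakCoords.1 hk, mem_peakCoords.1 hj]

theorem le_span_singleton_of_minimalFor_card_peakCoords
    (hV : ∀ x ∈ V, ∀ y ∈ V, ParallelPair 𝕜 x y)
    (hx : MinimalFor (fun v => v ∈ V ∧ v ≠ 0) (fun v => #(peakCoords v)) x) :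
    V ≤ 𝕜 ∙ x := by
  intro z hz
  obtain ⟨i, -⟩ := Function.ne_iff.1 hx.1.2
  have : Nonempty ι := ⟨i⟩
  obtain ⟨k, hk⟩ := peakCoords_nonempty x
  have hxk := apply_ne_zero_of_mem_peakCoords hx.1.2 hk
  set w := z - (z k / x k) • x
  have hwV : w ∈ V := V.sub_mem hz (V.smul_mem _ hx.1.1)
  have hwk : w k = 0 := by simp [w, hxk]
  obtain ⟨j, hjx, hjw⟩ := (hV x hx.1.1 w hwV).exists_mem_peakCoords
  have hw0 : w = 0 := norm_eq_zero.1 <| by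
    rw [← mem_peakCoords.1 hjw, apply_eq_zero_of_minimalFor_card_peakCoords hx hwV hk hwk hjx,
      norm_zero]
  exact Submodule.mem_span_singleton.2 ⟨z k / x k, (sub_eq_zero.1 hw0).symm⟩

end MinimalPeakCoords

/-- If `V` is a linear subspace of `𝔽ⁿ` (`𝔽 = ℝ` or `ℂ`, with the `ℓ∞`-norm, i.e. the
sup norm on `Fin n → 𝕜`) in which any two elements are parallel, then `dim V ≤ 1`. -/
theorem linfty_pairwise_parallel_subspace_dim_le_one {𝕜 : Type*} [RCLike 𝕜] {n : ℕ}
    (V : Submodule 𝕜 (Fin n → 𝕜))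
    (h : ∀ x ∈ V, ∀ y ∈ V, ParallelPair 𝕜 x y) :
    Module.finrank 𝕜 V ≤ 1 := by
  rcases eq_or_ne V ⊥ with rfl | hV
  · simp
  obtain ⟨x, hx⟩ := exists_minimalFor_of_wellFoundedLT (fun v => v ∈ V ∧ v ≠ 0)
    (fun v => (peakCoords v).card) (V.exists_mem_ne_zero_of_ne_bot hV)
  calc Module.finrank 𝕜 V ≤ Module.finrank 𝕜 (𝕜 ∙ x) :=
        Submodule.finrank_mono (le_span_singleton_of_minimalFor_card_peakCoords h hx)
    _ = 1 := finrank_span_singleton hx.1.2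
end

section
/- Let 𝔽 be ℝ or ℂ, and assume 𝔽ⁿ ≠ ℝ² (i.e., either n ≥ 3, or n = 2 and 𝔽 = ℂ, or n = 1). If T : 𝔽ⁿ → 𝔽ⁿ is a nonzero linear map that preserves TEA pairs with respect to the ℓ∞-norm (i.e., (Tx, Ty) is a TEA pair whenever (x, y) is a TEA pair), then T is invertible. -/
open scoped ENNReal

section aux
variable {𝕜 : Type*} [RCLike 𝕜] {n : ℕ}

lemma pi_norm_eq_apply (x : Fin n → 𝕜) (j : Fin n) (h : ∀ i, ‖x i‖ ≤ ‖x j‖) :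
    ‖x‖ = ‖x j‖ :=
  le_antisymm ((pi_norm_le_iff_of_nonneg (norm_nonneg _)).2 h) (norm_le_pi_norm x j)

lemma tea_of_witness (x y : Fin n → 𝕜) (j : Fin n)
    (hx : ∀ i, ‖x i‖ ≤ ‖x j‖) (hy : ∀ i, ‖y i‖ ≤ ‖y j‖)
    (ha : ‖x j + y j‖ = ‖x j‖ + ‖y j‖) : TEAPair x y := by
  have hxn := pi_norm_eq_apply x j hx
  have hyn := pi_norm_eq_apply y j hy
  show ‖x + y‖ = ‖x‖ + ‖y‖
  refine le_antisymm (norm_add_le x y) ?_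
  rw [hxn, hyn, ← ha]
  exact norm_le_pi_norm (x + y) j

lemma eq_zero_of_tea_neg {E : Type*} [NormedAddCommGroup E] (v : E)
    (h : TEAPair v (-v)) : v = 0 := by
  have h' : ‖v + -v‖ = ‖v‖ + ‖-v‖ := h
  rw [add_neg_cancel, norm_zero, norm_neg] at h'
  have : ‖v‖ = 0 := by linarith [norm_nonneg v]
  exact norm_eq_zero.mp this

lemma double_norm (a : 𝕜) : ‖a + a‖ = ‖a‖ + ‖a‖ := by
  have h : a + a = (2 : 𝕜) * a := by ring
  rw [h, norm_mul, RCLike.norm_two]; ring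

lemma exists_scale {n : ℕ} [Nonempty (Fin n)] (f : Fin n → ℝ) (r : ℝ) (hr : 0 < r)
    (hf : ∀ i, f i ≤ r) :
    ∃ s : ℝ, 1 < s ∧ ∀ i, f i ≠ r → s * f i + r ≤ (s - 1) * r := by
  classical
  set g : Fin n → ℝ := fun i => (2 * r) / (r - f i) with hg
  have hg0 : ∀ i, 0 ≤ g i := fun i =>
    div_nonneg (by positivity) (sub_nonneg.2 (hf i))
  obtain ⟨i0⟩ := ‹Nonempty (Fin n)›
  have hsup0 : 0 ≤ Finset.univ.sup' Finset.univ_nonempty g :=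
    le_trans (hg0 i0) (Finset.le_sup' g (Finset.mem_univ i0))
  refine ⟨2 + Finset.univ.sup' Finset.univ_nonempty g, by linarith, ?_⟩
  intro i hi
  set s : ℝ := 2 + Finset.univ.sup' Finset.univ_nonempty g with hs
  have hsg : g i ≤ s := by
    rw [hs]; linarith [Finset.le_sup' g (Finset.mem_univ i)]
  have hlt : f i < r := (hf i).lt_of_ne hi
  have hd : 0 < r - f i := by linarith
  have hgi : g i * (r - f i) = 2 * r := div_mul_cancel₀ _ (ne_of_gt hd)
  nlinarith [mul_le_mul_of_nonneg_right hsg (le_of_lt hd)]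

lemma killW (T : (Fin n → 𝕜) →ₗ[𝕜] Fin n → 𝕜)
    (h : ∀ x y : Fin n → 𝕜, TEAPair x y → TEAPair (T x) (T y))
    (z x : Fin n → 𝕜) (hz : T z = 0) (j0 : Fin n) (s : ℝ) (hs : 1 < s)
    (h1 : x j0 = z j0)
    (h2 : ∀ j, ‖x j‖ ≤ ‖z j0‖)
    (h3 : ∀ j, ‖(s : 𝕜) * z j - x j‖ ≤ (s - 1) * ‖z j0‖) :
    T x = 0 := by
  set y : Fin n → 𝕜 := (s : 𝕜) • z - x with hy
  have hyap : ∀ j, y j = (s : 𝕜) * z j - x j := fun j => by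
    simp only [hy, Pi.sub_apply, Pi.smul_apply, smul_eq_mul]
  have hyj0 : y j0 = ((s - 1 : ℝ) : 𝕜) * z j0 := by
    rw [hyap, h1]; push_cast; ring
  have hyj0n : ‖y j0‖ = (s - 1) * ‖z j0‖ := by
    rw [hyj0, norm_mul, RCLike.norm_ofReal, abs_of_pos (by linarith)]
  have tea : TEAPair x y := by
    refine tea_of_witness x y j0 (fun i => by rw [h1]; exact h2 i)
      (fun i => by rw [hyj0n, hyap]; exact h3 i) ?_
    have hsum : x j0 + y j0 = (s : 𝕜) * z j0 := by
      rw [hyap]; ring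
    rw [hsum, h1, hyj0n, norm_mul, RCLike.norm_ofReal, abs_of_pos (by linarith : (0:ℝ) < s)]
    ring
  have ht := h x y tea
  have hTy : T y = -T x := by
    rw [hy, map_sub, map_smul, hz, smul_zero, zero_sub]
  rw [hTy] at ht
  exact eq_zero_of_tea_neg _ ht

end aux

set_option maxHeartbeats 1600000 in
/-- Let `𝔽 = ℝ` or `ℂ` with `𝔽ⁿ ≠ ℝ²` (the case `𝔽 = ℝ` being encoded by
`RCLike.I = 0`).  A nonzero linear map `T` on `(𝔽ⁿ, ‖·‖_∞)` (sup norm on `Fin n → 𝕜`)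
preserving TEA pairs is invertible. -/
theorem linfty_TEA_preserver_invertible {𝕜 : Type*} [RCLike 𝕜] {n : ℕ}
    (hne : ¬((RCLike.I : 𝕜) = 0 ∧ n = 2))
    (T : (Fin n → 𝕜) →ₗ[𝕜] (Fin n → 𝕜)) (hT : T ≠ 0)
    (h : ∀ x y : Fin n → 𝕜, TEAPair x y → TEAPair (T x) (T y)) :
    Function.Bijective T := by
  classical
  suffices hinj : Function.Injective T by
    exact ⟨hinj, LinearMap.injective_iff_surjective.1 hinj⟩
  by_contra hni
  apply hT
  obtain ⟨z, hTz, hz0⟩ : ∃ z : Fin n → 𝕜, T z = 0 ∧ z ≠ 0 := by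
    rw [← LinearMap.ker_eq_bot] at hni
    obtain ⟨z, hz1, hz2⟩ := (Submodule.ne_bot_iff _).1 hni
    exact ⟨z, hz1, hz2⟩
  suffices hb : ∀ k, T (Pi.single k (1:𝕜)) = 0 by
    refine LinearMap.pi_ext fun i x => ?_
    have hsx : (Pi.single i x : Fin n → 𝕜) = x • (Pi.single i (1:𝕜) : Fin n → 𝕜) := by
      rw [← Pi.single_smul, smul_eq_mul, mul_one]
    rw [hsx, map_smul, hb i, smul_zero]
    simp
  obtain ⟨jne, hjne⟩ : ∃ j, z j ≠ 0 := by
    by_contra hc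
    push_neg at hc
    exact hz0 (funext hc)
  haveI : Nonempty (Fin n) := ⟨jne⟩
  obtain ⟨j0, -, hj0⟩ := Finset.exists_max_image Finset.univ (fun i => ‖z i‖)
    ⟨jne, Finset.mem_univ jne⟩
  simp only [Finset.mem_univ, true_implies] at hj0
  set r := ‖z j0‖ with hr
  have hrpos : 0 < r := lt_of_lt_of_le (norm_pos_iff.2 hjne) (hj0 jne)
  by_cases hM : ∀ i, ‖z i‖ = r
  · -- Case B : all coordinates of z attain the norm
    intro k
    have hzk : z k ≠ 0 := by
      intro h0
      have := hM k
      rw [h0, norm_zero] at this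
      exact absurd this.symm (ne_of_gt hrpos)
    rcases lt_or_ge n 3 with hn3 | hn3
    · have hn1 : 0 < n := Fin.pos_iff_nonempty.2 ‹Nonempty (Fin n)›
      rcases (by omega : n = 1 ∨ n = 2) with rfl | rfl
      · -- n = 1
        have hone : Pi.single k (1:𝕜) = (z k)⁻¹ • z := by
          funext i
          have hi : i = k := Subsingleton.elim i k
          subst hi
          simp [inv_mul_cancel₀ hzk]
        rw [hone, map_smul, hTz, smul_zero]
      · -- n = 2
        have hI : (RCLike.I : 𝕜) ≠ 0 := fun h0 => hne ⟨h0, rfl⟩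
        obtain ⟨j, hjk⟩ : ∃ j : Fin 2, j ≠ k := by
          fin_cases k
          · exact ⟨1, by decide⟩
          · exact ⟨0, by decide⟩
        set a : 𝕜 := RCLike.I - 1 with ha
        set b : 𝕜 := -RCLike.I - 1 with hb
        have hII : (RCLike.I : 𝕜) * RCLike.I = -1 := RCLike.I_mul_I_of_nonzero hI
        have hnI : ‖(RCLike.I : 𝕜)‖ = 1 := RCLike.norm_I_of_ne_zero hI
        set x : Fin 2 → 𝕜 := z + (a * z k) • (Pi.single k (1:𝕜) : Fin 2 → 𝕜) with hx
        set y : Fin 2 → 𝕜 := z + (b * z k) • (Pi.single k (1:𝕜) : Fin 2 → 𝕜) with hyy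
        have hxap : ∀ i, i ≠ k → x i = z i := fun i hi => by
          simp [hx, Pi.single_eq_of_ne hi]
        have hyap : ∀ i, i ≠ k → y i = z i := fun i hi => by
          simp [hyy, Pi.single_eq_of_ne hi]
        have hxk : x k = RCLike.I * z k := by
          have hxk' : x k = z k + a * z k := by
            simp [hx, Pi.single_eq_same]
          rw [hxk', ha]; ring
        have hyk : y k = -RCLike.I * z k := by
          have hyk' : y k = z k + b * z k := by
            simp [hyy, Pi.single_eq_same]
          rw [hyk', hb]; ring
        have hxnorm : ∀ i, ‖x i‖ = r := by
          intro i
          by_cases hik : i = k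
          · subst hik
            rw [hxk, norm_mul, hnI, one_mul]; exact hM i
          · rw [hxap i hik]; exact hM i
        have hynorm : ∀ i, ‖y i‖ = r := by
          intro i
          by_cases hik : i = k
          · subst hik
            rw [hyk, norm_mul, norm_neg, hnI, one_mul]; exact hM i
          · rw [hyap i hik]; exact hM i
        have tea := h x y (tea_of_witness x y j
          (fun i => le_of_eq (by rw [hxnorm i, hxnorm j]))
          (fun i => le_of_eq (by rw [hynorm i, hynorm j]))
          (by rw [hxap j hjk, hyap j hjk]; exact double_norm (z j)))
        set v := T (Pi.single k (1:𝕜)) with hv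
        have hTx : T x = (a * z k) • v := by
          rw [hx, map_add, map_smul, hTz, zero_add, hv]
        have hTy : T y = (b * z k) • v := by
          rw [hyy, map_add, map_smul, hTz, zero_add, hv]
        have hteq : ‖T x + T y‖ = ‖T x‖ + ‖T y‖ := tea
        have hsum : T x + T y = ((-2 : 𝕜) * z k) • v := by
          rw [hTx, hTy, ← add_smul]
          congr 1
          rw [ha, hb]; ring
        rw [hsum, hTx, hTy, norm_smul, norm_smul, norm_smul, norm_mul, norm_mul,
          norm_mul] at hteq
        have hn2 : ‖(-2 : 𝕜)‖ = 2 := by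
          rw [norm_neg, RCLike.norm_two]
        have hconja : (starRingEnd 𝕜) a = b := by
          rw [ha, hb, map_sub, RCLike.conj_I, map_one]
        have hconjb : (starRingEnd 𝕜) b = a := by
          rw [ha, hb, map_sub, map_neg, RCLike.conj_I, map_one, neg_neg]
        have hmul : a * b = 2 := by
          rw [ha, hb]
          linear_combination -hII
        have ha2 : ‖a‖ ^ 2 = 2 := by
          have h1 : ((‖a‖ : 𝕜)) ^ 2 = (2 : 𝕜) := by
            rw [← RCLike.mul_conj a, hconja, hmul]
          exact_mod_cast h1
        have hb2 : ‖b‖ ^ 2 = 2 := by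
          have h1 : ((‖b‖ : 𝕜)) ^ 2 = (2 : 𝕜) := by
            rw [← RCLike.mul_conj b, hconjb, mul_comm, hmul]
          exact_mod_cast h1
        have ha1 : 1 < ‖a‖ := by nlinarith [norm_nonneg a]
        have hb1 : 1 < ‖b‖ := by nlinarith [norm_nonneg b]
        have hzkr : ‖z k‖ = r := hM k
        rw [hzkr, hn2] at hteq
        have hv0 : ‖v‖ = 0 := by
          by_contra hvne
          have hvpos : 0 < ‖v‖ := (norm_nonneg v).lt_of_ne (Ne.symm hvne)
          nlinarith [mul_pos hrpos hvpos]
        exact norm_eq_zero.1 hv0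
    · -- n ≥ 3
      haveI : Nontrivial (Fin n) := Fin.nontrivial_iff_two_le.2 (by omega)
      obtain ⟨k', hk'⟩ := exists_ne k
      obtain ⟨j1, hj1k, hj1k'⟩ : ∃ j1 : Fin n, j1 ≠ k ∧ j1 ≠ k' := by
        by_contra hc
        push_neg at hc
        have hsub : (Finset.univ : Finset (Fin n)) ⊆ {k, k'} := by
          intro i _
          by_cases hik : i = k
          · simp [hik]
          · simp [hc i hik]
        have hcard := Finset.card_le_card hsub
        rw [Finset.card_univ, Fintype.card_fin] at hcard
        have h2 : ({k, k'} : Finset (Fin n)).card ≤ 2 := by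
          apply le_trans (Finset.card_insert_le _ _)
          simp
        omega
      set u1 : Fin n → 𝕜 := fun i => if i = k then -z i else z i with hu1
      set u2 : Fin n → 𝕜 := fun i => if i = k' then -z i else z i with hu2
      set u3 : Fin n → 𝕜 := fun i => if i = k ∨ i = k' then z i else -z i with hu3
      have hn1 : ∀ i, ‖u1 i‖ = r := fun i => by
        by_cases hik : i = k <;> simp [hu1, hik, hM]
      have hn2 : ∀ i, ‖u2 i‖ = r := fun i => by
        by_cases hik : i = k' <;> simp [hu2, hik, hM]
      have hn3n : ∀ i, ‖u3 i‖ = r := fun i => by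
        by_cases hik : i = k ∨ i = k' <;> simp [hu3, hik, hM]
      have hkk' : k ≠ k' := Ne.symm hk'
      have hu1j1 : u1 j1 = z j1 := by simp [hu1, hj1k]
      have hu2j1 : u2 j1 = z j1 := by simp [hu2, hj1k']
      have hu1k' : u1 k' = z k' := by simp [hu1, hk']
      have hu3k' : u3 k' = z k' := by simp [hu3]
      have hsum12 : u1 + u2 = z - u3 := by
        funext i
        simp only [Pi.add_apply, Pi.sub_apply, hu1, hu2, hu3]
        by_cases hik : i = k
        · subst hik
          rw [if_pos rfl, if_neg hkk', if_pos (Or.inl rfl)]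
          ring
        · by_cases hik' : i = k'
          · subst hik'
            rw [if_neg hik, if_pos rfl, if_pos (Or.inr rfl)]
            ring
          · rw [if_neg hik, if_neg hik', if_neg (by tauto)]
            ring
      have hsum13 : u1 + u3 = z - u2 := by
        funext i
        simp only [Pi.add_apply, Pi.sub_apply, hu1, hu2, hu3]
        by_cases hik : i = k
        · subst hik
          rw [if_pos rfl, if_pos (Or.inl rfl), if_neg hkk']
          ring
        · by_cases hik' : i = k'
          · subst hik'
            rw [if_neg hik, if_pos (Or.inr rfl), if_pos rfl]
            ring
          · rw [if_neg hik, if_neg (by tauto), if_neg hik']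
            ring
      have tea12 := h u1 u2 (tea_of_witness u1 u2 j1
        (fun i => le_of_eq (by rw [hn1 i, hn1 j1]))
        (fun i => le_of_eq (by rw [hn2 i, hn2 j1]))
        (by rw [hu1j1, hu2j1]; exact double_norm (z j1)))
      have tea13 := h u1 u3 (tea_of_witness u1 u3 k'
        (fun i => le_of_eq (by rw [hn1 i, hn1 k']))
        (fun i => le_of_eq (by rw [hn3n i, hn3n k']))
        (by rw [hu1k', hu3k']; exact double_norm (z k')))
      have e1 : ‖T u3‖ = ‖T u1‖ + ‖T u2‖ := by
        have h12 : T u1 + T u2 = -T u3 := by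
          rw [← map_add, hsum12, map_sub, hTz, zero_sub]
        have ht' : ‖T u1 + T u2‖ = ‖T u1‖ + ‖T u2‖ := tea12
        rw [h12, norm_neg] at ht'
        exact ht'
      have e2 : ‖T u2‖ = ‖T u1‖ + ‖T u3‖ := by
        have h13 : T u1 + T u3 = -T u2 := by
          rw [← map_add, hsum13, map_sub, hTz, zero_sub]
        have ht' : ‖T u1 + T u3‖ = ‖T u1‖ + ‖T u3‖ := tea13
        rw [h13, norm_neg] at ht'
        exact ht'
      have hTu1 : ‖T u1‖ = 0 := by linarith
      have hu1z : u1 = z - (2 * z k) • (Pi.single k (1:𝕜) : Fin n → 𝕜) := by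
        funext i
        simp only [Pi.sub_apply, Pi.smul_apply, smul_eq_mul, hu1]
        by_cases hik : i = k
        · subst hik
          rw [if_pos rfl, Pi.single_eq_same]
          ring
        · rw [if_neg hik, Pi.single_eq_of_ne hik]
          ring
      have h0 : T u1 = 0 := norm_eq_zero.1 hTu1
      rw [hu1z, map_sub, map_smul, hTz, zero_sub, neg_eq_zero] at h0
      have h2zk : (2 : 𝕜) * z k ≠ 0 := mul_ne_zero two_ne_zero hzk
      exact (smul_eq_zero.1 h0).resolve_left h2zk
  · -- Case A : some coordinate of z does not attain the norm
    push_neg at hM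
    obtain ⟨s, hs1, hkey0⟩ := exists_scale (fun i => ‖z i‖) r hrpos hj0
    have hkey : ∀ i, ‖z i‖ ≠ r → s * ‖z i‖ + r ≤ (s - 1) * r := hkey0
    have hspos : (0:ℝ) < s := by linarith
    set w : Fin n → 𝕜 := fun i => if ‖z i‖ = r then z i else 0 with hw
    have hw1 : w j0 = z j0 := by
      show (if ‖z j0‖ = r then z j0 else 0) = z j0
      exact if_pos hr.symm
    have hw2 : ∀ i, ‖w i‖ ≤ ‖z j0‖ := by
      intro i
      rw [← hr]
      simp only [hw]
      by_cases hi : ‖z i‖ = r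
      · rw [if_pos hi, hi]
      · rw [if_neg hi, norm_zero]
        linarith
    have hw3 : ∀ i, ‖(s:𝕜) * z i - w i‖ ≤ (s - 1) * ‖z j0‖ := by
      intro i
      rw [← hr]
      simp only [hw]
      by_cases hi : ‖z i‖ = r
      · rw [if_pos hi]
        have heq : (s:𝕜) * z i - z i = ((s - 1 : ℝ) : 𝕜) * z i := by
          push_cast; ring
        rw [heq, norm_mul, RCLike.norm_ofReal, abs_of_pos (by linarith), hi]
      · rw [if_neg hi, sub_zero, norm_mul, RCLike.norm_ofReal, abs_of_pos hspos]
        have := hkey i hi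
        linarith
    have hTw : T w = 0 := killW T h z w hTz j0 s hs1 hw1 hw2 hw3
    have step2 : ∀ k, ‖z k‖ ≠ r → T (Pi.single k (1:𝕜)) = 0 := by
      intro k hk
      have hkj0 : j0 ≠ k := by
        intro hh
        rw [hh] at hr
        exact hk hr.symm
      set x : Fin n → 𝕜 := w + ((r : 𝕜)) • (Pi.single k (1:𝕜) : Fin n → 𝕜) with hxx
      have hrK : ‖((r:ℝ) : 𝕜)‖ = r := by
        rw [RCLike.norm_ofReal, abs_of_pos hrpos]
      have hx1 : x j0 = z j0 := by
        simp only [hxx, Pi.add_apply, Pi.smul_apply, smul_eq_mul,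
          Pi.single_eq_of_ne hkj0, mul_zero, add_zero]
        exact hw1
      have hx2 : ∀ i, ‖x i‖ ≤ ‖z j0‖ := by
        intro i
        by_cases hik : i = k
        · subst hik
          have hxk : x i = (r : 𝕜) := by
            simp only [hxx, Pi.add_apply, Pi.smul_apply, smul_eq_mul, Pi.single_eq_same,
              mul_one, hw]
            rw [if_neg hk, zero_add]
          rw [hxk, hrK, ← hr]
        · have hxi : x i = w i := by
            simp only [hxx, Pi.add_apply, Pi.smul_apply, smul_eq_mul,
              Pi.single_eq_of_ne hik, mul_zero, add_zero]
          rw [hxi]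
          exact hw2 i
      have hx3 : ∀ i, ‖(s:𝕜) * z i - x i‖ ≤ (s - 1) * ‖z j0‖ := by
        intro i
        by_cases hik : i = k
        · subst hik
          have hxk : x i = (r : 𝕜) := by
            simp only [hxx, Pi.add_apply, Pi.smul_apply, smul_eq_mul, Pi.single_eq_same,
              mul_one, hw]
            rw [if_neg hk, zero_add]
          rw [hxk, ← hr]
          calc ‖(s:𝕜) * z i - (r:𝕜)‖ ≤ ‖(s:𝕜) * z i‖ + ‖((r:ℝ):𝕜)‖ := norm_sub_le _ _
          _ = s * ‖z i‖ + r := by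
                rw [norm_mul, RCLike.norm_ofReal, abs_of_pos hspos, hrK]
          _ ≤ (s - 1) * r := hkey i hk
        · have hxi : x i = w i := by
            simp only [hxx, Pi.add_apply, Pi.smul_apply, smul_eq_mul,
              Pi.single_eq_of_ne hik, mul_zero, add_zero]
          rw [hxi]
          exact hw3 i
      have hTx : T x = 0 := killW T h z x hTz j0 s hs1 hx1 hx2 hx3
      rw [hxx, map_add, map_smul, hTw, zero_add] at hTx
      have hrne : ((r:ℝ) : 𝕜) ≠ 0 := RCLike.ofReal_ne_zero.2 (ne_of_gt hrpos)
      exact (smul_eq_zero.1 hTx).resolve_left hrne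
    obtain ⟨k0, hk0⟩ := hM
    intro jj
    by_cases hjj : ‖z jj‖ = r
    · have hjjk0 : jj ≠ k0 := by
        intro hh
        rw [hh] at hjj
        exact hk0 hjj
      have hk0jj : k0 ≠ jj := Ne.symm hjjk0
      have hek0 : T (Pi.single k0 (1:𝕜)) = 0 := step2 k0 hk0
      set x2 : Fin n → 𝕜 := (Pi.single k0 (1:𝕜) : Fin n → 𝕜) + (Pi.single jj (1:𝕜) : Fin n → 𝕜) with hx2d
      have hz1 : (Pi.single k0 (1:𝕜) : Fin n → 𝕜) k0 = 1 := by simp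
      have he1 : x2 k0 = (Pi.single k0 (1:𝕜) : Fin n → 𝕜) k0 := by
        simp only [hx2d, Pi.add_apply, Pi.single_eq_same, Pi.single_eq_of_ne hk0jj, add_zero]
      have he2 : ∀ i, ‖x2 i‖ ≤ ‖(Pi.single k0 (1:𝕜) : Fin n → 𝕜) k0‖ := by
        intro i
        rw [hz1, norm_one]
        simp only [hx2d, Pi.add_apply]
        by_cases hik : i = k0
        · subst hik
          rw [Pi.single_eq_same, Pi.single_eq_of_ne hk0jj, add_zero, norm_one]
        · by_cases hij : i = jj
          · subst hij
            rw [Pi.single_eq_same, Pi.single_eq_of_ne hik, zero_add, norm_one]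
          · rw [Pi.single_eq_of_ne hik, Pi.single_eq_of_ne hij, add_zero, norm_zero]
            linarith
      have he3 : ∀ i, ‖((2:ℝ):𝕜) * (Pi.single k0 (1:𝕜) : Fin n → 𝕜) i - x2 i‖ ≤
          ((2:ℝ) - 1) * ‖(Pi.single k0 (1:𝕜) : Fin n → 𝕜) k0‖ := by
        intro i
        rw [hz1, norm_one]
        simp only [hx2d, Pi.add_apply]
        by_cases hik : i = k0
        · subst hik
          rw [Pi.single_eq_same, Pi.single_eq_of_ne hk0jj]
          push_cast
          norm_num
        · by_cases hij : i = jj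
          · subst hij
            rw [Pi.single_eq_of_ne hjjk0, Pi.single_eq_same]
            push_cast
            norm_num
          · rw [Pi.single_eq_of_ne hik, Pi.single_eq_of_ne hij]
            push_cast
            norm_num
      have hx2e : T x2 = 0 :=
        killW T h (Pi.single k0 (1:𝕜)) x2 hek0 k0 2 (by norm_num) he1 he2 he3
      rw [hx2d, map_add, hek0, zero_add] at hx2e
      exact hx2e
    · exact step2 jj hjj
end

section
/- Let 𝔽 be ℝ or ℂ and let A = (a_{rs}) ∈ M_n(𝔽). Suppose that either the diagonal entries a_{jj} are real and a_{jj} > |a_{jk}| whenever j ≠ k, or the diagonal entries a_{jj} are real and a_{jj} > |a_{kj}| whenever j ≠ k. Then the following are equivalent: (a) for every x = (x_1, …, x_n)ᵗ ∈ 𝔽ⁿ with y = Aᵗx = (y_1, …, y_n)ᵗ, if there is an index r such that |x_r| > |x_s| for all s ≠ r, then |y_r| ≥ |y_s| for all s ≠ r; (b) either n = 2 and A is Hermitian (A = A*) with a_{11} = a_{22} > |a_{12}|, or A = a_{11} I_n. -/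
open scoped ENNReal

open RCLike Filter ComplexConjugate


section Aux

variable {𝕜 : Type*} [RCLike 𝕜] {n : ℕ}

private lemma sq_norm_add' (u v : 𝕜) :
    ‖u + v‖^2 = ‖u‖^2 + ‖v‖^2 + 2 * re (u * conj v) := by
  simp only [RCLike.norm_sq_eq_def, map_add, RCLike.mul_re, RCLike.mul_im,
    RCLike.conj_re, RCLike.conj_im]
  ring

private lemma key_lin (t E : ℝ) (ht : 0 ≤ t) (w : 𝕜)
    (h : ∀ z : 𝕜, ‖z‖ = t → 0 ≤ E + 2 * re (z * w)) : 2 * t * ‖w‖ ≤ E := by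
  by_cases hw : w = 0
  · have := h (t : 𝕜) (by simpa using ht)
    simpa [hw] using this
  · have hwn : (0:ℝ) < ‖w‖ := norm_pos_iff.mpr hw
    have hz : ‖(-(t:𝕜)) * conj w / (‖w‖:𝕜)‖ = t := by
      rw [norm_div, norm_mul, norm_neg, RCLike.norm_conj]
      simp [abs_of_nonneg ht, hwn.ne']
    have H := h _ hz
    have hre : re ((-(t:𝕜)) * conj w / (‖w‖:𝕜) * w) = - (t * ‖w‖) := by
      have e1 : (-(t:𝕜)) * conj w / (‖w‖:𝕜) * w = -(t:𝕜) * ((‖w‖:𝕜)^2) / (‖w‖:𝕜) := by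
        rw [div_mul_eq_mul_div, mul_assoc, mul_comm (conj w) w, RCLike.mul_conj]
      rw [e1]
      have e2 : -(t:𝕜) * ((‖w‖:𝕜)^2) / (‖w‖:𝕜) = ((-(t * ‖w‖) : ℝ) : 𝕜) := by
        have hne : (‖w‖:𝕜) ≠ 0 := by simpa using hwn.ne'
        field_simp
        push_cast
        ring
      rw [e2, RCLike.ofReal_re]
    rw [hre] at H
    linarith

private lemma lemA (P Q R : ℝ) (h : ∀ t : ℝ, 0 < t → t < 1 → 0 ≤ P + t*Q + t^2*R) :
    0 ≤ P + Q + R := by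
  have h1 : Tendsto (fun t : ℝ => P + t*Q + t^2*R) (nhdsWithin 1 (Set.Iio 1))
      (nhds (P + Q + R)) := by
    have hc : Continuous (fun t : ℝ => P + t*Q + t^2*R) := by continuity
    have := hc.tendsto 1
    simpa using this.mono_left nhdsWithin_le_nhds
  refine ge_of_tendsto h1 ?_
  filter_upwards [Ioo_mem_nhdsLT_of_mem (by norm_num : (1:ℝ) ∈ Set.Ioc 0 1)] with t ht
  exact h t ht.1 ht.2

private lemma lemB (K C : ℝ) (h : ∀ s : ℝ, 0 < s → s < 1 → 2*K ≤ s*C) : K ≤ 0 := by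
  have h1 : Tendsto (fun s : ℝ => s*C) (nhdsWithin 0 (Set.Ioi 0)) (nhds 0) := by
    have hc : Continuous (fun s : ℝ => s*C) := by continuity
    have := hc.tendsto 0
    simp only [zero_mul] at this
    exact this.mono_left nhdsWithin_le_nhds
  have h2 : (2*K : ℝ) ≤ 0 := by
    refine ge_of_tendsto h1 ?_
    filter_upwards [Ioo_mem_nhdsGT_of_mem (by norm_num : (0:ℝ) ∈ Set.Ico 0 1)] with s hs
    exact h s hs.1 hs.2
  linarith

private lemma g_expand (dr ds : ℝ) (c q z : 𝕜) :
    ‖(dr:𝕜) + z*q‖^2 - ‖c + z*(ds:𝕜)‖^2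
      = (dr^2 - ‖c‖^2) + ‖z‖^2*(‖q‖^2 - ds^2)
        + 2 * re (z * ((dr:𝕜)*q - (ds:𝕜)*conj c)) := by
  simp only [RCLike.norm_sq_eq_def, map_add, map_sub, RCLike.mul_re, RCLike.mul_im,
    RCLike.conj_re, RCLike.conj_im, RCLike.ofReal_re, RCLike.ofReal_im]
  ring

private lemma e2_expand (u₁ u₂ b δ ε : 𝕜) :
    ‖u₁ + b*δ‖^2 - ‖u₂ + b*ε‖^2
      = (‖u₁‖^2 - ‖u₂‖^2) + ‖b‖^2*(‖δ‖^2 - ‖ε‖^2)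
        + 2 * re (b * (δ*conj u₁ - ε*conj u₂)) := by
  simp only [RCLike.norm_sq_eq_def, map_add, map_sub, RCLike.mul_re, RCLike.mul_im,
    RCLike.conj_re, RCLike.conj_im]
  ring

private lemma e1_expand (d : ℝ) (γ a : 𝕜) :
    ‖(d:𝕜) + a*conj γ‖^2 - ‖γ + a*(d:𝕜)‖^2 = (d^2 - ‖γ‖^2)*(1 - ‖a‖^2) := by
  simp only [RCLike.norm_sq_eq_def, map_add, RCLike.mul_re, RCLike.mul_im,
    RCLike.conj_re, RCLike.conj_im, RCLike.ofReal_re, RCLike.ofReal_im]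
  ring

private lemma herm2_expand (d : ℝ) (b x0 x1 : 𝕜) :
    ‖(d:𝕜)*x0 + conj b*x1‖^2 - ‖b*x0 + (d:𝕜)*x1‖^2
      = (d^2 - ‖b‖^2)*(‖x0‖^2 - ‖x1‖^2) := by
  simp only [RCLike.norm_sq_eq_def, map_add, RCLike.mul_re, RCLike.mul_im,
    RCLike.conj_re, RCLike.conj_im, RCLike.ofReal_re, RCLike.ofReal_im]
  ring

private lemma herm2_le (d : ℝ) (b x0 x1 : 𝕜) (hbd : ‖b‖ ≤ d) (hx : ‖x1‖ ≤ ‖x0‖) :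
    ‖b*x0 + (d:𝕜)*x1‖ ≤ ‖(d:𝕜)*x0 + conj b*x1‖ := by
  have h := herm2_expand d b x0 x1
  have h2 : ‖b*x0+(d:𝕜)*x1‖^2 ≤ ‖(d:𝕜)*x0+conj b*x1‖^2 := by
    have h1' : 0 ≤ d^2 - ‖b‖^2 := by nlinarith [norm_nonneg b]
    have h2' : 0 ≤ ‖x0‖^2 - ‖x1‖^2 := by nlinarith [norm_nonneg x1]
    nlinarith [mul_nonneg h1' h2']
  exact (pow_le_pow_iff_left₀ (norm_nonneg _) (norm_nonneg _) two_ne_zero).mp h2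

private lemma pair_ineq (A : Matrix (Fin n) (Fin n) 𝕜)
    (ha : ∀ x : Fin n → 𝕜, ∀ r : Fin n,
        (∀ s, s ≠ r → ‖x s‖ < ‖x r‖) →
        ∀ s, s ≠ r → ‖A.transpose.mulVec x s‖ ≤ ‖A.transpose.mulVec x r‖)
    (r s : Fin n) (hrs : r ≠ s) (z : 𝕜) (hz : ‖z‖ < 1) :
    ‖A r s + z * A s s‖ ≤ ‖A r r + z * A s r‖ := by
  set x : Fin n → 𝕜 := (Pi.single r (1:𝕜) : Fin n → 𝕜) + z • (Pi.single s (1:𝕜) : Fin n → 𝕜)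
    with hxdef
  have hxr : x r = 1 := by
    simp [hxdef, Pi.single_apply, hrs]
  have hmax : ∀ j, j ≠ r → ‖x j‖ < ‖x r‖ := by
    intro j hj
    rw [hxr]
    by_cases hjs : j = s
    · subst hjs
      simp [hxdef, Pi.single_apply, Ne.symm hrs, hz]
    · simp [hxdef, Pi.single_apply, hj, hjs]
  have hmv : ∀ j, A.transpose.mulVec x j = A r j + z * A s j := by
    intro j
    simp [hxdef, Matrix.mulVec_add, Matrix.mulVec_smul, Matrix.transpose_apply, smul_eq_mul]
  have := ha x r hmax s (Ne.symm hrs)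
  rwa [hmv, hmv] at this

private lemma trip_ineq (A : Matrix (Fin n) (Fin n) 𝕜)
    (ha : ∀ x : Fin n → 𝕜, ∀ r : Fin n,
        (∀ s, s ≠ r → ‖x s‖ < ‖x r‖) →
        ∀ s, s ≠ r → ‖A.transpose.mulVec x s‖ ≤ ‖A.transpose.mulVec x r‖)
    (p q k : Fin n) (hpq : p ≠ q) (hkp : k ≠ p) (hkq : k ≠ q)
    (a b : 𝕜) (haa : ‖a‖ < 1) (hbb : ‖b‖ < 1)
    (s : Fin n) (hs : s ≠ p) :
    ‖A p s + a * A q s + b * A k s‖ ≤ ‖A p p + a * A q p + b * A k p‖ := by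
  set x : Fin n → 𝕜 := (Pi.single p (1:𝕜) : Fin n → 𝕜) + a • (Pi.single q (1:𝕜) : Fin n → 𝕜)
      + b • (Pi.single k (1:𝕜) : Fin n → 𝕜) with hxdef
  have hxp : x p = 1 := by
    simp [hxdef, Pi.single_apply, hpq, Ne.symm hkp]
  have hmax : ∀ j, j ≠ p → ‖x j‖ < ‖x p‖ := by
    intro j hj
    rw [hxp]
    by_cases hjq : j = q
    · subst hjq
      simp [hxdef, Pi.single_apply, hj, Ne.symm hkq, haa]
    · by_cases hjk : j = k
      · subst hjk
        simp [hxdef, Pi.single_apply, hj, hjq, hbb]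
      · simp [hxdef, Pi.single_apply, hj, hjq, hjk]
  have hmv : ∀ j, A.transpose.mulVec x j = A p j + a * A q j + b * A k j := by
    intro j
    simp [hxdef, Matrix.mulVec_add, Matrix.mulVec_smul, Matrix.transpose_apply, smul_eq_mul]
  have := ha x p hmax s hs
  rwa [hmv, hmv] at this

private lemma step1 (A : Matrix (Fin n) (Fin n) 𝕜)
    (hreal : ∀ j, RCLike.im (A j j) = 0)
    (hdom : (∀ j k, j ≠ k → ‖A j k‖ < RCLike.re (A j j)) ∨
            (∀ j k, j ≠ k → ‖A k j‖ < RCLike.re (A j j)))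
    (ha : ∀ x : Fin n → 𝕜, ∀ r : Fin n,
        (∀ s, s ≠ r → ‖x s‖ < ‖x r‖) →
        ∀ s, s ≠ r → ‖A.transpose.mulVec x s‖ ≤ ‖A.transpose.mulVec x r‖)
    (r s : Fin n) (hrs : r ≠ s) :
    re (A r r) = re (A s s) ∧ A s r = conj (A r s) := by
  set dr := re (A r r) with hdr
  set ds := re (A s s) with hds
  have hAr : A r r = (dr:𝕜) := by
    apply RCLike.ext <;> simp [hdr, hreal r]
  have hAs : A s s = (ds:𝕜) := by
    apply RCLike.ext <;> simp [hds, hreal s]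
  have hdrpos : 0 < dr := by
    rcases hdom with h | h
    · exact lt_of_le_of_lt (norm_nonneg (A r s)) (h r s hrs)
    · exact lt_of_le_of_lt (norm_nonneg (A s r)) (h r s hrs)
  have hdspos : 0 < ds := by
    rcases hdom with h | h
    · exact lt_of_le_of_lt (norm_nonneg (A s r)) (h s r hrs.symm)
    · exact lt_of_le_of_lt (norm_nonneg (A r s)) (h s r hrs.symm)
  set c := A r s with hc
  set q := A s r with hq
  set aa := ‖c‖ with haa
  set bb := ‖q‖ with hbb
  set w : 𝕜 := (dr:𝕜)*q - (ds:𝕜)*conj c with hwdef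
  set w' : 𝕜 := (ds:𝕜)*c - (dr:𝕜)*conj q with hw'def
  have hw : ∀ t:ℝ, 0 < t → t < 1 → 2*t*‖w‖ ≤ (dr^2 - aa^2) + t^2*(bb^2 - ds^2) := by
    intro t ht0 ht1
    apply key_lin _ _ ht0.le
    intro z hzt
    have h0 := pair_ineq A ha r s hrs z (by rw [hzt]; exact ht1)
    rw [hAr, hAs] at h0
    have h1 := pow_le_pow_left₀ (norm_nonneg _) h0 2
    have h2 := g_expand dr ds c q z
    rw [hzt] at h2
    linarith
  have hw' : ∀ t:ℝ, 0 < t → t < 1 → 2*t*‖w'‖ ≤ (ds^2 - bb^2) + t^2*(aa^2 - dr^2) := by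
    intro t ht0 ht1
    apply key_lin _ _ ht0.le
    intro z hzt
    have h0 := pair_ineq A ha s r hrs.symm z (by rw [hzt]; exact ht1)
    rw [hAr, hAs] at h0
    have h1 := pow_le_pow_left₀ (norm_nonneg _) h0 2
    have h2 := g_expand ds dr q c z
    rw [hzt] at h2
    linarith
  have hwsum : 0 ≤ ((dr^2-aa^2)+(ds^2-bb^2)) + (-2*(‖w‖+‖w'‖)) + ((bb^2-ds^2)+(aa^2-dr^2)) := by
    apply lemA
    intro t ht0 ht1
    have h1 := hw t ht0 ht1
    have h2 := hw' t ht0 ht1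
    nlinarith [norm_nonneg w, norm_nonneg w']
  have hwz : w = 0 := by
    have := norm_nonneg w
    have := norm_nonneg w'
    have : ‖w‖ = 0 := by linarith
    exact norm_eq_zero.mp this
  have hw'z : w' = 0 := by
    have := norm_nonneg w
    have := norm_nonneg w'
    have : ‖w'‖ = 0 := by linarith
    exact norm_eq_zero.mp this
  have hD1 : 0 ≤ (dr^2 - aa^2) + (bb^2 - ds^2) := by
    have := lemA ((dr^2 - aa^2)) 0 ((bb^2 - ds^2)) (fun t ht0 ht1 => by
      have := hw t ht0 ht1
      rw [hwz] at this
      simp at this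
      linarith)
    linarith
  have hD2 : 0 ≤ (ds^2 - bb^2) + (aa^2 - dr^2) := by
    have := lemA ((ds^2 - bb^2)) 0 ((aa^2 - dr^2)) (fun t ht0 ht1 => by
      have := hw' t ht0 ht1
      rw [hw'z] at this
      simp at this
      linarith)
    linarith
  have hDeq : dr^2 - aa^2 + bb^2 - ds^2 = 0 := by linarith
  have hnr : dr * bb = ds * aa := by
    have h1 : (dr:𝕜)*q = (ds:𝕜)*conj c := by
      rw [sub_eq_zero] at hwz
      exact hwz
    have h2 := congrArg norm h1
    rw [norm_mul, norm_mul, RCLike.norm_ofReal, RCLike.norm_ofReal, RCLike.norm_conj,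
      abs_of_pos hdrpos, abs_of_pos hdspos] at h2
    exact h2
  have hkey : aa = bb ∧ dr = ds := by
    by_cases haz : aa = 0
    · have hbz : bb = 0 := by
        have hb0 : dr * bb = 0 := by rw [hnr, haz]; ring
        rcases mul_eq_zero.mp hb0 with h | h
        · exact absurd h hdrpos.ne'
        · exact h
      refine ⟨by rw [haz, hbz], ?_⟩
      rw [haz, hbz] at hDeq
      nlinarith
    · have haa0 : 0 < aa := lt_of_le_of_ne (norm_nonneg _) (Ne.symm haz)
      have hfac : (aa^2 - bb^2)*(dr^2 - aa^2) = 0 := by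
        linear_combination aa^2*hDeq - (dr*bb + ds*aa)*hnr
      by_cases hab : aa = bb
      · refine ⟨hab, ?_⟩
        rw [hab] at hnr
        have hbb0 : 0 < bb := hab ▸ haa0
        exact mul_right_cancel₀ hbb0.ne' hnr
      · exfalso
        have h1 : dr^2 = aa^2 := by
          rcases mul_eq_zero.mp hfac with h | h
          · exact absurd (by nlinarith [norm_nonneg c, norm_nonneg q] : aa = bb) hab
          · linarith
        have hdra : dr = aa := by nlinarith
        rcases hdom with h | h
        · have := h r s hrs
          rw [← hc, ← haa, ← hdr] at this
          linarith
        · have h1 := h r s hrs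
          have h2 := h s r hrs.symm
          rw [← hq, ← hbb, ← hdr] at h1
          rw [← hc, ← haa, ← hds] at h2
          have hds_eq : ds = bb := by
            rw [hdra] at hnr
            have h3 : aa * ds = aa * bb := by
              have := mul_comm ds aa
              linarith
            exact (mul_left_cancel₀ haz h3)
          linarith
  obtain ⟨hab, hdd⟩ := hkey
  constructor
  · exact hdd
  · have h1 : (dr:𝕜)*q = (dr:𝕜)*conj c := by
      rw [sub_eq_zero] at hwz
      rw [hwz, hdd]
    have hdrne : (dr:𝕜) ≠ 0 := by
      simpa using hdrpos.ne'
    exact mul_left_cancel₀ hdrne h1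

private lemma step2 (A : Matrix (Fin n) (Fin n) 𝕜) (d : ℝ)
    (ha : ∀ x : Fin n → 𝕜, ∀ r : Fin n,
        (∀ s, s ≠ r → ‖x s‖ < ‖x r‖) →
        ∀ s, s ≠ r → ‖A.transpose.mulVec x s‖ ≤ ‖A.transpose.mulVec x r‖)
    (p q k : Fin n) (hpq : p ≠ q) (hkp : k ≠ p) (hkq : k ≠ q)
    (hApp : A p p = (d:𝕜)) (hAqq : A q q = (d:𝕜))
    (hqp : A q p = conj (A p q)) (hγd : ‖A p q‖ < d) :
    A k p = 0 ∧ A k q = 0 := by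
  set γ := A p q with hγ
  set δ := A k p with hδ
  set ε := A k q with hε
  set u : 𝕜 := δ*(d:𝕜) - ε*conj γ with hu
  set v : 𝕜 := δ*γ - ε*(d:𝕜) with hv
  set C := ‖δ‖^2 - ‖ε‖^2 with hC
  set G := ‖γ‖^2 with hG
  have hdpos : 0 < d := lt_of_le_of_lt (norm_nonneg _) hγd
  have hGd : G < d^2 := by
    have := norm_nonneg γ
    nlinarith
  have hWa : ∀ a : 𝕜, ‖a‖ < 1 → ∀ s' : ℝ, 0 < s' → s' < 1 →
      2*s'*‖δ*conj ((d:𝕜)+a*conj γ) - ε*conj (γ+a*(d:𝕜))‖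
        ≤ (d^2-G)*(1-‖a‖^2) + s'^2*C := by
    intro a haa s' hs0 hs1
    apply key_lin _ _ hs0.le
    intro b hbs
    have h0 := trip_ineq A ha p q k hpq hkp hkq a b haa (by rw [hbs]; exact hs1) q hpq.symm
    rw [hApp, hAqq, hqp] at h0
    have h1 := pow_le_pow_left₀ (norm_nonneg _) h0 2
    have h2 := e2_expand ((d:𝕜)+a*conj γ) (γ+a*(d:𝕜)) b δ ε
    have h3 := e1_expand d γ a
    rw [hbs] at h2
    have h4 : ‖γ + a * (d:𝕜) + b * ε‖ ^ 2 ≤ ‖(d:𝕜) + a * conj γ + b * δ‖ ^ 2 := by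
      convert h1 using 2
    rw [← hC] at h2
    rw [← hG] at h3
    linarith
  have hWplus : ∀ t : ℝ,
      δ*conj ((d:𝕜)+(t:𝕜)*conj γ) - ε*conj (γ+(t:𝕜)*(d:𝕜)) = u + (t:𝕜)*v := by
    intro t
    simp only [hu, hv, map_add, map_mul, RCLike.conj_ofReal, RCLike.conj_conj]
    ring
  have hWminus : ∀ t : ℝ,
      δ*conj ((d:𝕜)+(-(t:𝕜))*conj γ) - ε*conj (γ+(-(t:𝕜))*(d:𝕜)) = u - (t:𝕜)*v := by
    intro t
    simp only [hu, hv, map_add, map_mul, map_neg, RCLike.conj_ofReal, RCLike.conj_conj]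
    ring
  have hnormbound : ∀ (x y : 𝕜) (t : ℝ), 0 < t → t < 1 →
      ‖x + y‖ - (1-t)*‖y‖ ≤ ‖x + (t:𝕜)*y‖ := by
    intro x y t ht0 ht1
    have hxy : x + y = (x + (t:𝕜)*y) + ((1-t:ℝ):𝕜)*y := by push_cast; ring
    have hb : ‖x+y‖ ≤ ‖x + (t:𝕜)*y‖ + ‖((1-t:ℝ):𝕜)*y‖ := by
      rw [hxy]; exact norm_add_le _ _
    rw [norm_mul, RCLike.norm_ofReal, abs_of_nonneg (by linarith : (0:ℝ) ≤ 1 - t)] at hb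
    linarith
  have hup : u + v = 0 := by
    have hK : ‖u + v‖ ≤ 0 := by
      apply lemB _ C
      intro s' hs0 hs1
      have hmain : 0 ≤ ((d^2-G) + s'^2*C - 2*s'*‖u+v‖ + 2*s'*‖v‖)
          + (-2*s'*‖v‖) + (-(d^2-G)) := by
        apply lemA
        intro t ht0 ht1
        have ht : ‖((t:ℝ):𝕜)‖ < 1 := by
          rw [RCLike.norm_ofReal, abs_of_pos ht0]; exact ht1
        have h1 := hWa ((t:ℝ):𝕜) ht s' hs0 hs1
        rw [hWplus t] at h1
        have h2 := hnormbound u v t ht0 ht1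
        have h3 : ‖((t:ℝ):𝕜)‖^2 = t^2 := by
          rw [RCLike.norm_ofReal, sq_abs]
        rw [h3] at h1
        nlinarith [mul_le_mul_of_nonneg_left h2 hs0.le, h1]
      nlinarith
    exact norm_le_zero_iff.mp hK
  have hum : u - v = 0 := by
    have hK : ‖u - v‖ ≤ 0 := by
      apply lemB _ C
      intro s' hs0 hs1
      have hmain : 0 ≤ ((d^2-G) + s'^2*C - 2*s'*‖u-v‖ + 2*s'*‖v‖)
          + (-2*s'*‖v‖) + (-(d^2-G)) := by
        apply lemA
        intro t ht0 ht1
        have htm : ‖(-(t:𝕜))‖ < 1 := by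
          rw [norm_neg, RCLike.norm_ofReal, abs_of_pos ht0]; exact ht1
        have h1 := hWa (-(t:𝕜)) htm s' hs0 hs1
        rw [hWminus t] at h1
        have h2 := hnormbound u (-v) t ht0 ht1
        have h3 : ‖(-(t:𝕜))‖^2 = t^2 := by
          rw [norm_neg, RCLike.norm_ofReal, sq_abs]
        rw [h3] at h1
        have h4 : u + (t:𝕜)*(-v) = u - (t:𝕜)*v := by ring
        rw [h4] at h2
        have h5 : u + -v = u - v := by ring
        rw [h5] at h2
        have h6 : ‖-v‖ = ‖v‖ := norm_neg v
        rw [h6] at h2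
        nlinarith [mul_le_mul_of_nonneg_left h2 hs0.le, h1]
      nlinarith
    exact norm_le_zero_iff.mp hK
  have hu0 : u = 0 := by linear_combination (1/2:𝕜)*hup + (1/2:𝕜)*hum
  have hv0 : v = 0 := by linear_combination (1/2:𝕜)*hup - (1/2:𝕜)*hum
  rw [hu] at hu0
  rw [hv] at hv0
  have hδ0 : δ = 0 := by
    have hfac : δ * ((d:𝕜)^2 - ((‖γ‖:ℝ):𝕜)^2) = 0 := by
      linear_combination (d:𝕜)*hu0 - conj γ*hv0 + δ*(RCLike.mul_conj γ)
    have hne : ((d:𝕜)^2 - ((‖γ‖:ℝ):𝕜)^2) ≠ 0 := by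
      have heq : ((d:𝕜)^2 - ((‖γ‖:ℝ):𝕜)^2) = (((d^2 - ‖γ‖^2 : ℝ)):𝕜) := by push_cast; ring
      rw [heq, ne_eq, RCLike.ofReal_eq_zero]
      rw [hG] at hGd
      intro hcontra
      nlinarith
    rcases mul_eq_zero.mp hfac with h | h
    · exact h
    · exact absurd h hne
  have hε0 : ε = 0 := by
    rw [hδ0] at hv0
    have h7 : ε * (d:𝕜) = 0 := by linear_combination -hv0
    rcases mul_eq_zero.mp h7 with h | h
    · exact h
    · exfalso
      rw [RCLike.ofReal_eq_zero] at h
      exact hdpos.ne' h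
  exact ⟨hδ0, hε0⟩

end Aux

/-- Let `𝔽 = ℝ` or `ℂ` and `A = (a_{rs}) ∈ M_n(𝔽)` with real diagonal entries, such that
either `a_{jj} > |a_{jk}|` whenever `j ≠ k`, or `a_{jj} > |a_{kj}|` whenever `j ≠ k`.
Then the following are equivalent:
(a) for every `x` with `y = Aᵗx`: if `|x_r| > |x_s|` for all `s ≠ r`, then
    `|y_r| ≥ |y_s|` for all `s ≠ r`;
(b) either `n = 2` and `A` is Hermitian with `a₁₁ = a₂₂ > |a₁₂|`, or `A = a₁₁ Iₙ`. -/
theorem A_matrix_lemma {𝕜 : Type*} [RCLike 𝕜] {n : ℕ} (hn : 0 < n)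
    (A : Matrix (Fin n) (Fin n) 𝕜)
    (hreal : ∀ j, RCLike.im (A j j) = 0)
    (hdom : (∀ j k, j ≠ k → ‖A j k‖ < RCLike.re (A j j)) ∨
            (∀ j k, j ≠ k → ‖A k j‖ < RCLike.re (A j j))) :
    ((∀ x : Fin n → 𝕜, ∀ r : Fin n,
        (∀ s, s ≠ r → ‖x s‖ < ‖x r‖) →
        ∀ s, s ≠ r → ‖A.transpose.mulVec x s‖ ≤ ‖A.transpose.mulVec x r‖) ↔
      ((∃ hn2 : n = 2,
          A.IsHermitian ∧
          A ⟨0, by omega⟩ ⟨0, by omega⟩ = A ⟨1, by omega⟩ ⟨1, by omega⟩ ∧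
          ‖A ⟨0, by omega⟩ ⟨1, by omega⟩‖ < RCLike.re (A ⟨0, by omega⟩ ⟨0, by omega⟩)) ∨
        A = A ⟨0, hn⟩ ⟨0, hn⟩ • (1 : Matrix (Fin n) (Fin n) 𝕜))) := by
  constructor
  · intro ha
    by_cases hn3 : 3 ≤ n
    · -- n ≥ 3 : A is scalar
      right
      have hs1 := step1 A hreal hdom ha
      set d : ℝ := re (A ⟨0,hn⟩ ⟨0,hn⟩) with hd
      have hdiag : ∀ j, A j j = (d:𝕜) := by
        intro j
        by_cases hj : j = ⟨0,hn⟩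
        · subst hj
          apply RCLike.ext
          · rw [RCLike.ofReal_re, hd]
          · rw [RCLike.ofReal_im, hreal]
        · apply RCLike.ext
          · rw [RCLike.ofReal_re, hd]; exact (hs1 j ⟨0,hn⟩ hj).1
          · rw [RCLike.ofReal_im, hreal j]
      have hredg : ∀ j, re (A j j) = d := by
        intro j; rw [hdiag j, RCLike.ofReal_re]
      have hoff : ∀ i j, i ≠ j → A i j = 0 := by
        intro i j hij
        have hcard : ((({i, j} : Finset (Fin n)))ᶜ).Nonempty := by
          rw [← Finset.card_pos, Finset.card_compl]
          have h2 : ({i,j} : Finset (Fin n)).card ≤ 2 := by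
            apply le_trans (Finset.card_insert_le _ _)
            simp
          have h3 : Fintype.card (Fin n) = n := Fintype.card_fin n
          omega
        obtain ⟨q, hq⟩ := hcard
        simp only [Finset.mem_compl, Finset.mem_insert, Finset.mem_singleton] at hq
        push_neg at hq
        obtain ⟨hqi, hqj⟩ := hq
        have hjq : j ≠ q := Ne.symm hqj
        have hiq : i ≠ q := Ne.symm hqi
        have hqp : A q j = conj (A j q) := (hs1 j q hjq).2
        have hγd : ‖A j q‖ < d := by
          rcases hdom with h | h
          · have := h j q hjq
            rwa [hredg j] at this
          · have := h j q hjq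
            rw [hredg j, hqp, RCLike.norm_conj] at this
            exact this
        exact (step2 A d ha j q i hjq hij hiq (hdiag j) (hdiag q) hqp hγd).1
      ext i j
      by_cases hij : i = j
      · subst hij
        rw [Matrix.smul_apply, Matrix.one_apply_eq, smul_eq_mul, mul_one, hdiag i, hdiag ⟨0,hn⟩]
      · rw [Matrix.smul_apply, Matrix.one_apply_ne hij, smul_eq_mul, mul_zero, hoff i j hij]
    · by_cases hn2 : n = 2
      · left
        refine ⟨hn2, ?_, ?_, ?_⟩
        · have hs1 := step1 A hreal hdom ha
          apply Matrix.ext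
          intro i j
          rw [Matrix.conjTranspose_apply, RCLike.star_def]
          by_cases hij : i = j
          · subst hij
            exact (RCLike.conj_eq_iff_im).mpr (hreal i)
          · rw [(hs1 i j hij).2, RCLike.conj_conj]
        · have hs1 := step1 A hreal hdom ha
          have hz01 : (⟨0, by omega⟩ : Fin n) ≠ ⟨1, by omega⟩ := by
            intro h
            simpa using congrArg Fin.val h
          apply RCLike.ext
          · exact (hs1 _ _ hz01).1
          · rw [hreal, hreal]
        · have hs1 := step1 A hreal hdom ha
          have hz01 : (⟨0, by omega⟩ : Fin n) ≠ ⟨1, by omega⟩ := by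
            intro h
            simpa using congrArg Fin.val h
          rcases hdom with h | h
          · exact h _ _ hz01
          · have h2 := h _ _ hz01
            rwa [(hs1 _ _ hz01).2, RCLike.norm_conj] at h2
      · -- n = 1
        have hn1 : n = 1 := by omega
        right
        ext i j
        have hi0 : i = ⟨0, hn⟩ := by
          have h1 := i.2
          apply Fin.ext
          simp only []
          omega
        have hj0 : j = ⟨0, hn⟩ := by
          have h1 := j.2
          apply Fin.ext
          simp only []
          omega
        subst hi0; subst hj0
        rw [Matrix.smul_apply, Matrix.one_apply_eq, smul_eq_mul, mul_one]
  · rintro (⟨hn2, hherm, heq, hlt⟩ | hscal)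
    · -- n = 2 hermitian case
      subst hn2
      intro x r hx s hs
      set z0 : Fin 2 := ⟨0, by omega⟩ with hz0
      set z1 : Fin 2 := ⟨1, by omega⟩ with hz1
      set dd : ℝ := re (A z0 z0) with hdd
      have hA00 : A z0 z0 = (dd:𝕜) := by
        apply RCLike.ext
        · rw [RCLike.ofReal_re]
        · rw [RCLike.ofReal_im, hreal]
      have hA11 : A z1 z1 = (dd:𝕜) := by rw [← heq]; exact hA00
      have hA10 : A z1 z0 = conj (A z0 z1) := by
        have := congrFun (congrFun hherm.symm z1) z0
        rw [Matrix.conjTranspose_apply] at this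
        exact this
      have hbd : ‖A z0 z1‖ ≤ dd := le_of_lt hlt
      have hmv : ∀ j : Fin 2, A.transpose.mulVec x j = A z0 j * x z0 + A z1 j * x z1 := by
        intro j
        simp [Matrix.mulVec, dotProduct, Fin.sum_univ_two, Matrix.transpose_apply, hz0, hz1]
      have hcases : ∀ m : Fin 2, m = z0 ∨ m = z1 := by
        intro m
        rcases m with ⟨mv, hmv'⟩
        interval_cases mv
        · left; rfl
        · right; rfl
      rcases hcases r with hr | hr <;> rcases hcases s with hsc | hsc <;> subst hr <;> subst hsc
      · exact absurd rfl hs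
      · -- r = z0, s = z1
        have hx1 := (hx z1 (by intro h; simpa [hz0, hz1] using congrArg Fin.val h)).le
        rw [hmv z0, hmv z1, hA11, hA10, hA00]
        exact herm2_le dd (A z0 z1) (x z0) (x z1) hbd hx1
      · -- r = z1, s = z0
        have hx0 := (hx z0 (by intro h; simpa [hz0, hz1] using congrArg Fin.val h)).le
        rw [hmv z0, hmv z1, hA11, hA10, hA00]
        have h := herm2_le dd (conj (A z0 z1)) (x z1) (x z0) (by rw [RCLike.norm_conj]; exact hbd) hx0
        rw [RCLike.conj_conj] at h
        have e1 : (dd:𝕜) * x z0 + conj (A z0 z1) * x z1 = conj (A z0 z1) * x z1 + (dd:𝕜) * x z0 := by ring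
        have e2 : A z0 z1 * x z0 + (dd:𝕜) * x z1 = (dd:𝕜) * x z1 + A z0 z1 * x z0 := by ring
        rw [e1, e2]
        exact h
      · exact absurd rfl hs
    · -- scalar case
      intro x r hx s hs
      rw [hscal]
      have hT : (A ⟨0,hn⟩ ⟨0,hn⟩ • (1:Matrix (Fin n) (Fin n) 𝕜)).transpose
          = A ⟨0,hn⟩ ⟨0,hn⟩ • 1 := by
        rw [Matrix.transpose_smul, Matrix.transpose_one]
      rw [hT, Matrix.smul_mulVec, Matrix.one_mulVec]
      simp only [Pi.smul_apply, smul_eq_mul, norm_mul]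
      exact mul_le_mul_of_nonneg_left (hx s hs).le (norm_nonneg _)
end

section
/- Let 𝔽 be ℝ or ℂ, let Λ be an index set, and let x = (x_λ), y = (y_λ) be elements of ℓ₁(Λ), the Banach space of absolutely summable families over Λ with norm ‖x‖₁ = Σ_{λ∈Λ} |x_λ|. Then x and y form a parallel pair if and only if there exists a scalar μ ∈ 𝔽 with |μ| = 1 such that μ · conj(x_λ) · y_λ is a nonnegative real number for all λ ∈ Λ; and x and y form a TEA pair if and only if conj(x_λ) · y_λ is a nonnegative real number for all λ ∈ Λ. -/
open scoped ENNReal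

/-!
The norm of `ℓ₁(Λ)` is the sum of the norms of the coordinates, and each coordinate satisfies
the triangle inequality, so `‖x + y‖₁ = ‖x‖₁ + ‖y‖₁` forces equality in every coordinate.
In a scalar field, `‖a + b‖ = ‖a‖ + ‖b‖` says `re (conj a * b) = ‖conj a * b‖`, i.e. that
`conj a * b` is a nonnegative real. Since `μ • y` has the norm of `y` when `|μ| = 1`,
the parallel case is the TEA case for the pair `x, μ • y`.
-/

open RCLike ComplexConjugate

theorem isNonnegReal_iff_re_eq_norm {𝕜 : Type*} [RCLike 𝕜] {z : 𝕜} :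
    IsNonnegReal z ↔ re z = ‖z‖ := by
  constructor
  · rintro ⟨r, hr, rfl⟩
    rw [ofReal_re, norm_of_nonneg hr]
  · intro h
    exact ⟨‖z‖, norm_nonneg z, norm_le_re_iff_eq_norm.mp h.ge⟩

theorem norm_add_eq_iff_re_inner_eq_norm_mul_norm {𝕜 E : Type*} [RCLike 𝕜]
    [NormedAddCommGroup E] [InnerProductSpace 𝕜 E] {x y : E} :
    ‖x + y‖ = ‖x‖ + ‖y‖ ↔ re (inner 𝕜 x y) = ‖x‖ * ‖y‖ := by
  rw [← pow_left_inj₀ (norm_nonneg _) (add_nonneg (norm_nonneg _) (norm_nonneg _)) two_ne_zero,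
    norm_add_sq (𝕜 := 𝕜), add_pow_two, add_left_inj, add_right_inj, mul_assoc,
    mul_right_inj' two_ne_zero]

theorem RCLike.norm_add_eq_iff_isNonnegReal_conj_mul {𝕜 : Type*} [RCLike 𝕜] {a b : 𝕜} :
    ‖a + b‖ = ‖a‖ + ‖b‖ ↔ IsNonnegReal (conj a * b) := by
  rw [norm_add_eq_iff_re_inner_eq_norm_mul_norm (𝕜 := 𝕜), inner_apply',
    isNonnegReal_iff_re_eq_norm, norm_mul, norm_conj]

theorem Summable.tsum_eq_tsum_iff_of_le {ι α : Type*} [AddCommGroup α] [PartialOrder α]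
    [IsOrderedAddMonoid α] [TopologicalSpace α] [IsTopologicalAddGroup α]
    [OrderClosedTopology α] {f g : ι → α} (hf : Summable f) (hg : Summable g) (h : f ≤ g) :
    ∑' i, f i = ∑' i, g i ↔ f = g :=
  ⟨fun heq => by_contra fun hne => (hf.tsum_strict_mono hg (h.lt_of_ne hne)).ne heq,
    fun heq => heq ▸ rfl⟩

namespace lp

variable {α : Type*} {E : α → Type*} [∀ i, NormedAddCommGroup (E i)]

theorem summable_norm_of_one (f : lp E 1) : Summable fun i => ‖f i‖ := by
  simpa using (lp.memℓp f).summable (p := 1) (by norm_num)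

theorem norm_eq_tsum_norm_of_one (f : lp E 1) : ‖f‖ = ∑' i, ‖f i‖ := by
  simpa using lp.norm_eq_tsum_rpow (p := 1) (by norm_num) f

theorem norm_add_eq_iff_of_one {x y : lp E 1} :
    ‖x + y‖ = ‖x‖ + ‖y‖ ↔ ∀ i, ‖x i + y i‖ = ‖x i‖ + ‖y i‖ := by
  rw [norm_eq_tsum_norm_of_one, norm_eq_tsum_norm_of_one, norm_eq_tsum_norm_of_one,
    ← (summable_norm_of_one x).tsum_add (summable_norm_of_one y), ← funext_iff]
  exact Summable.tsum_eq_tsum_iff_of_le (summable_norm_of_one (x + y))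
    ((summable_norm_of_one x).add (summable_norm_of_one y)) fun i => norm_add_le (x i) (y i)

end lp

theorem teaPair_iff_forall_isNonnegReal_conj_mul {𝕜 Λ : Type*} [RCLike 𝕜]
    {x y : lp (fun _ : Λ => 𝕜) 1} :
    TEAPair x y ↔ ∀ l, IsNonnegReal (conj (x l) * y l) := by
  rw [TEAPair, lp.norm_add_eq_iff_of_one]
  exact forall_congr' fun l => norm_add_eq_iff_isNonnegReal_conj_mul

theorem parallelPair_iff_exists_teaPair_smul {𝕜 E : Type*} [RCLike 𝕜] [NormedAddCommGroup E]
    [NormedSpace 𝕜 E] {x y : E} :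
    ParallelPair 𝕜 x y ↔ ∃ μ : 𝕜, ‖μ‖ = 1 ∧ TEAPair x (μ • y) :=
  exists_congr fun μ => and_congr_right fun hμ => by
    rw [TEAPair, norm_smul, hμ, one_mul]

/-- For `x, y ∈ ℓ₁(Λ)` over `𝔽 = ℝ` or `ℂ`: `x, y` are parallel iff there is a
unimodular scalar `μ` with `μ * conj(x_λ) * y_λ ≥ 0` for all `λ`; and `x, y` form a
TEA pair iff `conj(x_λ) * y_λ ≥ 0` for all `λ`. -/
theorem l1_inf_parallel_TEA_characterization {𝕜 : Type*} [RCLike 𝕜] {Λ : Type*}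
    (x y : lp (fun _ : Λ => 𝕜) 1) :
    (ParallelPair 𝕜 x y ↔
      ∃ μ : 𝕜, ‖μ‖ = 1 ∧ ∀ l : Λ, IsNonnegReal (μ * (starRingEnd 𝕜) (x l) * y l)) ∧
    (TEAPair x y ↔ ∀ l : Λ, IsNonnegReal ((starRingEnd 𝕜) (x l) * y l)) := by
  refine ⟨?_, teaPair_iff_forall_isNonnegReal_conj_mul⟩
  rw [parallelPair_iff_exists_teaPair_smul]
  refine exists_congr fun μ => and_congr_right fun _ => ?_
  rw [teaPair_iff_forall_isNonnegReal_conj_mul]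
  refine forall_congr' fun l => ?_
  rw [lp.coeFn_smul, Pi.smul_apply, smul_eq_mul, mul_left_comm, mul_assoc]
end

section
/- Let 𝔽 be ℝ or ℂ, let Λ be an index set, and let x = (x_λ), y = (y_λ) be elements of ℓ∞(Λ), the Banach space of bounded families over Λ with the supremum norm ‖x‖∞ = sup_{λ∈Λ} |x_λ|. Then x and y form a parallel pair if and only if there exists an ultrafilter 𝔘 on Λ such that the limit of |conj(x_λ) · y_λ| along 𝔘 equals ‖x‖∞ · ‖y‖∞; and x and y form a TEA pair if and only if there exists an ultrafilter 𝔘 on Λ such that the limit of conj(x_λ) · y_λ along 𝔘 equals ‖x‖∞ · ‖y‖∞. -/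
open Filter
open scoped ENNReal

set_option synthInstance.maxHeartbeats 1000000
set_option maxHeartbeats 1000000

section Aux
variable {𝕜 : Type*} [RCLike 𝕜] {Λ : Type*}

lemma ultra_lim' (f : Λ → 𝕜) (C : ℝ)
    (hf : ∀ l, ‖f l‖ ≤ C) (𝔘 : Ultrafilter Λ) :
    ∃ c : 𝕜, ‖c‖ ≤ C ∧ Tendsto f 𝔘 (nhds c) := by
  have hcpt : IsCompact (Metric.closedBall (0:𝕜) C) := isCompact_closedBall 0 C
  have hle : ↑(Ultrafilter.map f 𝔘) ≤ Filter.principal (Metric.closedBall (0:𝕜) C) := by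
    simp only [Filter.le_principal_iff, Ultrafilter.mem_coe]
    exact Filter.eventually_map.2 (Filter.Eventually.of_forall fun l => by
      simpa [Metric.mem_closedBall, dist_eq_norm] using hf l)
  obtain ⟨c, hc, hlim⟩ := hcpt.ultrafilter_le_nhds (Ultrafilter.map f 𝔘) hle
  exact ⟨c, by simpa [Metric.mem_closedBall, dist_eq_norm] using hc, hlim⟩

lemma sup_ultra' [Nonempty Λ] (g : Λ → ℝ) (M : ℝ) (h1 : ∀ l, g l ≤ M)
    (h2 : ∀ ε : ℝ, 0 < ε → ∃ l, M - ε < g l) :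
    ∃ 𝔘 : Ultrafilter Λ, Tendsto g 𝔘 (nhds M) := by
  set F : Filter Λ := ⨅ ε : {ε : ℝ // 0 < ε}, Filter.principal {l | M - ε.1 < g l} with hF
  haveI : Nonempty {ε : ℝ // 0 < ε} := ⟨⟨1, one_pos⟩⟩
  have hne : F.NeBot := by
    apply Filter.iInf_neBot_of_directed
    · rintro ⟨ε₁, h₁⟩ ⟨ε₂, h₂⟩
      refine ⟨⟨min ε₁ ε₂, lt_min h₁ h₂⟩, Filter.principal_mono.2 ?_, Filter.principal_mono.2 ?_⟩ <;>
        · intro l hl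
          simp only [Set.mem_setOf_eq] at hl ⊢
          have := min_le_left ε₁ ε₂
          have := min_le_right ε₁ ε₂
          linarith
    · rintro ⟨ε, hε⟩
      simp only [Filter.principal_neBot_iff, Set.nonempty_def]
      exact h2 ε hε
  refine ⟨Ultrafilter.of F, ?_⟩
  rw [Metric.tendsto_nhds]
  intro ε hε
  have hmem : {l | M - ε < g l} ∈ F :=
    Filter.mem_iInf_of_mem ⟨ε, hε⟩ (Filter.mem_principal_self _)
  filter_upwards [Ultrafilter.of_le F hmem] with l hl
  rw [Real.dist_eq, abs_lt]
  constructor <;> [linarith; linarith [h1 l]]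

lemma re_conj_mul' (a b : 𝕜) :
    ‖a + b‖ ^ 2 = ‖a‖ ^ 2 + 2 * RCLike.re ((starRingEnd 𝕜) a * b) + ‖b‖ ^ 2 := by
  rw [← RCLike.normSq_eq_def', RCLike.normSq_add, RCLike.normSq_eq_def',
    RCLike.normSq_eq_def']
  have : a * (starRingEnd 𝕜) b = (starRingEnd 𝕜) ((starRingEnd 𝕜) a * b) := by
    rw [map_mul, RCLike.conj_conj]
  rw [this, RCLike.conj_re]
  ring

lemma tri_eq (a b : 𝕜) (h : ‖a + b‖ = ‖a‖ + ‖b‖) :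
    (starRingEnd 𝕜) a * b = ((‖a‖ * ‖b‖ : ℝ) : 𝕜) := by
  set z := (starRingEnd 𝕜) a * b with hz
  have hre : RCLike.re z = ‖a‖ * ‖b‖ := by
    have e1 := re_conj_mul' a b
    rw [h] at e1
    nlinarith [e1]
  have habs : ‖z‖ ≤ ‖a‖ * ‖b‖ := by
    rw [hz, norm_mul, RCLike.norm_conj]
  have := RCLike.re_eq_self_of_le (a := z) (by rw [hre]; exact habs)
  rw [← this, hre]

lemma tri_eq' (a b : 𝕜)
    (h : (starRingEnd 𝕜) a * b = ((‖a‖ * ‖b‖ : ℝ) : 𝕜)) : ‖a + b‖ = ‖a‖ + ‖b‖ := by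
  have hre : RCLike.re ((starRingEnd 𝕜) a * b) = ‖a‖ * ‖b‖ := by
    rw [h, RCLike.ofReal_re]
  have e1 := re_conj_mul' a b
  rw [hre] at e1
  have h2 : (0:ℝ) ≤ ‖a‖ + ‖b‖ := by positivity
  nlinarith [norm_nonneg (a + b), e1]

variable [Nonempty Λ]

lemma TEA_char (x y : lp (fun _ : Λ => 𝕜) ∞) :
    TEAPair x y ↔
      ∃ 𝔘 : Ultrafilter Λ,
        Filter.Tendsto (fun l : Λ => (starRingEnd 𝕜) (x l) * y l) 𝔘
          (nhds ((‖x‖ * ‖y‖ : ℝ) : 𝕜)) := by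
  have hbx : ∀ l, ‖x l‖ ≤ ‖x‖ := fun l => lp.norm_apply_le_norm ENNReal.top_ne_zero x l
  have hby : ∀ l, ‖y l‖ ≤ ‖y‖ := fun l => lp.norm_apply_le_norm ENNReal.top_ne_zero y l
  have hb : ∀ l, ‖x l + y l‖ ≤ ‖x + y‖ := fun l => by
    have := lp.norm_apply_le_norm ENNReal.top_ne_zero (x + y) l
    rwa [lp.coeFn_add, Pi.add_apply] at this
  constructor
  · intro h
    have h' : ‖x + y‖ = ‖x‖ + ‖y‖ := h
    have h2 : ∀ ε : ℝ, 0 < ε → ∃ l, ‖x + y‖ - ε < ‖x l + y l‖ := by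
      intro ε hε
      have hlt : ‖x + y‖ - ε < ⨆ l, ‖(x + y) l‖ := by
        rw [← lp.norm_eq_ciSup]; linarith
      obtain ⟨l, hl⟩ := exists_lt_of_lt_ciSup hlt
      rw [lp.coeFn_add, Pi.add_apply] at hl
      exact ⟨l, hl⟩
    obtain ⟨𝔘, hg⟩ := sup_ultra' (fun l => ‖x l + y l‖) ‖x + y‖ hb h2
    obtain ⟨a, ha, hax⟩ := ultra_lim' (fun l => x l) ‖x‖ hbx 𝔘
    obtain ⟨b, hbb, hay⟩ := ultra_lim' (fun l => y l) ‖y‖ hby 𝔘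
    have hsum : Tendsto (fun l => ‖x l + y l‖) 𝔘 (nhds ‖a + b‖) := (hax.add hay).norm
    have hab : ‖a + b‖ = ‖x‖ + ‖y‖ := by
      rw [← h']; exact tendsto_nhds_unique hsum hg
    have ha' : ‖a‖ = ‖x‖ := by linarith [norm_add_le a b]
    have hb' : ‖b‖ = ‖y‖ := by linarith [norm_add_le a b]
    have key := tri_eq a b (by rw [ha', hb']; exact hab)
    refine ⟨𝔘, ?_⟩
    have : Tendsto (fun l => (starRingEnd 𝕜) (x l) * y l) 𝔘
        (nhds ((starRingEnd 𝕜) a * b)) :=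
      (((RCLike.continuous_conj.tendsto a).comp hax).mul hay)
    rwa [key, ha', hb'] at this
  · rintro ⟨𝔘, h⟩
    obtain ⟨a, ha, hax⟩ := ultra_lim' (fun l => x l) ‖x‖ hbx 𝔘
    obtain ⟨b, hbb, hay⟩ := ultra_lim' (fun l => y l) ‖y‖ hby 𝔘
    have hlim : Tendsto (fun l => (starRingEnd 𝕜) (x l) * y l) 𝔘
        (nhds ((starRingEnd 𝕜) a * b)) :=
      (((RCLike.continuous_conj.tendsto a).comp hax).mul hay)
    have hc : (starRingEnd 𝕜) a * b = ((‖x‖ * ‖y‖ : ℝ) : 𝕜) := tendsto_nhds_unique hlim h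
    by_cases hx0 : ‖x‖ = 0
    · have : x = 0 := norm_eq_zero.mp hx0
      show ‖x + y‖ = ‖x‖ + ‖y‖
      rw [this, zero_add, norm_zero, zero_add]
    by_cases hy0 : ‖y‖ = 0
    · have : y = 0 := norm_eq_zero.mp hy0
      show ‖x + y‖ = ‖x‖ + ‖y‖
      rw [this, add_zero, norm_zero, add_zero]
    have hxp : 0 < ‖x‖ := lt_of_le_of_ne (norm_nonneg x) (Ne.symm hx0)
    have hyp : 0 < ‖y‖ := lt_of_le_of_ne (norm_nonneg y) (Ne.symm hy0)
    have hnab : ‖a‖ * ‖b‖ = ‖x‖ * ‖y‖ := by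
      have := congrArg norm hc
      rwa [norm_mul, RCLike.norm_conj, RCLike.norm_ofReal,
        abs_of_nonneg (by positivity : (0:ℝ) ≤ ‖x‖ * ‖y‖)] at this
    have ha' : ‖a‖ = ‖x‖ := by nlinarith [norm_nonneg a, norm_nonneg b]
    have hb' : ‖b‖ = ‖y‖ := by nlinarith [norm_nonneg a, norm_nonneg b]
    have key : ‖a + b‖ = ‖a‖ + ‖b‖ := tri_eq' a b (by rw [ha', hb']; exact hc)
    have hsum : Tendsto (fun l => ‖x l + y l‖) 𝔘 (nhds ‖a + b‖) := (hax.add hay).norm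
    have hle : ‖a + b‖ ≤ ‖x + y‖ := by
      exact le_of_tendsto hsum (Filter.Eventually.of_forall fun l => hb l)
    show ‖x + y‖ = ‖x‖ + ‖y‖
    have := norm_add_le x y
    rw [key, ha', hb'] at hle
    linarith

end Aux

/-- For `x, y ∈ ℓ∞(Λ)` over a nonempty index set `Λ`: `x, y` are parallel iff
`lim_𝔘 |conj(x_λ) * y_λ| = ‖x‖∞ ‖y‖∞` along some ultrafilter `𝔘` on `Λ`; and `x, y`
form a TEA pair iff `lim_𝔘 conj(x_λ) * y_λ = ‖x‖∞ ‖y‖∞` along some ultrafilter `𝔘`. -/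
theorem linfty_inf_parallel_TEA_characterization {𝕜 : Type*} [RCLike 𝕜] {Λ : Type*}
    [Nonempty Λ] (x y : lp (fun _ : Λ => 𝕜) ∞) :
    (ParallelPair 𝕜 x y ↔
      ∃ 𝔘 : Ultrafilter Λ,
        Filter.Tendsto (fun l : Λ => ‖(starRingEnd 𝕜) (x l) * y l‖) 𝔘 (nhds (‖x‖ * ‖y‖))) ∧
    (TEAPair x y ↔
      ∃ 𝔘 : Ultrafilter Λ,
        Filter.Tendsto (fun l : Λ => (starRingEnd 𝕜) (x l) * y l) 𝔘
          (nhds ((‖x‖ * ‖y‖ : ℝ) : 𝕜))) := by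
  refine ⟨?_, TEA_char x y⟩
  constructor
  · rintro ⟨μ, hμ, hnorm⟩
    have hsm : ‖μ • y‖ = ‖y‖ := by rw [norm_smul, hμ, one_mul]
    have htea : TEAPair x (μ • y) := by
      show ‖x + μ • y‖ = ‖x‖ + ‖μ • y‖
      rw [hsm]; exact hnorm
    obtain ⟨𝔘, hU⟩ := (TEA_char x (μ • y)).mp htea
    refine ⟨𝔘, ?_⟩
    have hU' : Tendsto (fun l => ‖(starRingEnd 𝕜) (x l) * (μ • y) l‖) 𝔘
        (nhds ‖((‖x‖ * ‖μ • y‖ : ℝ) : 𝕜)‖) := hU.norm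
    have heq : (fun l => ‖(starRingEnd 𝕜) (x l) * (μ • y) l‖)
        = fun l => ‖(starRingEnd 𝕜) (x l) * y l‖ := by
      funext l
      rw [lp.coeFn_smul]
      simp only [Pi.smul_apply, smul_eq_mul, norm_mul, RCLike.norm_conj, hμ]
      ring
    rw [heq, RCLike.norm_ofReal, hsm,
      abs_of_nonneg (by positivity : (0:ℝ) ≤ ‖x‖ * ‖y‖)] at hU'
    exact hU'
  · rintro ⟨𝔘, h⟩
    by_cases h0 : ‖x‖ * ‖y‖ = 0
    · refine ⟨1, norm_one, ?_⟩
      rw [one_smul]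
      rcases mul_eq_zero.mp h0 with h1 | h1
      · rw [norm_eq_zero.mp h1, zero_add, norm_zero, zero_add]
      · rw [norm_eq_zero.mp h1, add_zero, norm_zero, add_zero]
    have hpos : 0 < ‖x‖ * ‖y‖ :=
      lt_of_le_of_ne (by positivity) (Ne.symm h0)
    have hbnd : ∀ l, ‖(starRingEnd 𝕜) (x l) * y l‖ ≤ ‖x‖ * ‖y‖ := fun l => by
      rw [norm_mul, RCLike.norm_conj]
      exact mul_le_mul (lp.norm_apply_le_norm ENNReal.top_ne_zero x l)
        (lp.norm_apply_le_norm ENNReal.top_ne_zero y l) (norm_nonneg _) (norm_nonneg _)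
    obtain ⟨c, hcle, hclim⟩ := ultra_lim' (fun l => (starRingEnd 𝕜) (x l) * y l)
      (‖x‖ * ‖y‖) hbnd 𝔘
    have hcnorm : ‖c‖ = ‖x‖ * ‖y‖ := tendsto_nhds_unique hclim.norm h
    have hcne : c ≠ 0 := by
      intro hc0
      rw [hc0, norm_zero] at hcnorm
      exact h0 hcnorm.symm
    set μ : 𝕜 := ((‖x‖ * ‖y‖ : ℝ) : 𝕜) / c with hμdef
    have hμ : ‖μ‖ = 1 := by
      rw [hμdef, norm_div, RCLike.norm_ofReal, abs_of_nonneg hpos.le, hcnorm]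
      exact div_self h0
    refine ⟨μ, hμ, ?_⟩
    have hsm : ‖μ • y‖ = ‖y‖ := by rw [norm_smul, hμ, one_mul]
    have htea : TEAPair x (μ • y) := by
      apply (TEA_char x (μ • y)).mpr
      refine ⟨𝔘, ?_⟩
      have : Tendsto (fun l => μ * ((starRingEnd 𝕜) (x l) * y l)) 𝔘 (nhds (μ * c)) :=
        hclim.const_mul μ
      have hμc : μ * c = ((‖x‖ * ‖y‖ : ℝ) : 𝕜) := by
        rw [hμdef]; field_simp
      have heq : (fun l => (starRingEnd 𝕜) (x l) * (μ • y) l)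
          = fun l => μ * ((starRingEnd 𝕜) (x l) * y l) := by
        funext l
        rw [lp.coeFn_smul]
        simp only [Pi.smul_apply, smul_eq_mul]
        ring
      rw [heq, hsm]
      rwa [hμc] at this
    have h' : ‖x + μ • y‖ = ‖x‖ + ‖μ • y‖ := htea
    rw [hsm] at h'
    exact h'
end

section
/- Let 𝔽 be ℝ or ℂ and let Λ be an index set. Let T : ℓ₁(Λ) → ℓ₁(Λ) be a bounded linear map, and let t_{αβ} denote the α-coordinate of T(e_β), where e_β is the β-th coordinate vector. Then T preserves TEA pairs (i.e., (Tx, Ty) is a TEA pair whenever (x, y) is a TEA pair) if and only if for each α ∈ Λ there is at most one β ∈ Λ such that t_{αβ} ≠ 0. -/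
open scoped ENNReal

/-!
In `ℓ₁` the norm is the sum of the norms of the coordinates, and the triangle inequality holds in
each coordinate, so `(x, y)` is a TEA pair exactly when `(x β, y β)` is one for every `β`.
If row `α` of the matrix of `T` has a single nonzero entry `t_{αβ₀}`, then `(T x)_α = x_{β₀} t_{αβ₀}`,
and TEA pairs of scalars are stable under multiplication by `t_{αβ₀}`. Conversely, if
`t_{αβ} ≠ 0 ≠ t_{αβ'}` with `β ≠ β'`, then `e_β` and `-(t_{αβ} / t_{αβ'}) e_{β'}` have disjoint
supports, hence form a TEA pair, while the `α`-coordinates of their images cancel.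
-/

section TEAPair

lemma TEAPair.eq_zero_of_add_eq_zero {E : Type*} [NormedAddCommGroup E] {a b : E}
    (h : TEAPair a b) (hab : a + b = 0) : a = 0 := by
  unfold TEAPair at h
  rw [hab, norm_zero] at h
  exact norm_eq_zero.1 (by linarith [norm_nonneg a, norm_nonneg b])

lemma TEAPair.mul_right {R : Type*} [NormedDivisionRing R] {a b : R} (h : TEAPair a b) (t : R) :
    TEAPair (a * t) (b * t) := by
  unfold TEAPair at h ⊢
  rw [← add_mul, norm_mul, norm_mul, norm_mul, h, add_mul]

end TEAPair

namespace lp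

section TEAPair

variable {ι : Type*} {E : ι → Type*} [∀ i, NormedAddCommGroup (E i)]

lemma hasSum_norm_one (f : lp E 1) : HasSum (fun i => ‖f i‖) ‖f‖ := by
  simpa using lp.hasSum_norm (p := 1) (by simp) f

lemma teaPair_iff_forall_apply {x y : lp E 1} : TEAPair x y ↔ ∀ i, TEAPair (x i) (y i) := by
  have hsum : HasSum (fun i => ‖x i‖ + ‖y i‖) (‖x‖ + ‖y‖) :=
    (hasSum_norm_one x).add (hasSum_norm_one y)
  constructor
  · intro hxy i
    refine le_antisymm (norm_add_le _ _) (not_lt.1 fun hlt => ?_)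
    have := hasSum_lt (fun j => norm_add_le (x j) (y j)) hlt (hasSum_norm_one (x + y)) hsum
    exact this.ne hxy
  · intro h
    exact (hasSum_norm_one (x + y)).unique (hsum.congr_fun fun i => by rw [lp.coeFn_add]; exact h i)

lemma teaPair_single_single [DecidableEq ι] {i j : ι} (hij : i ≠ j) (a : E i) (b : E j) :
    TEAPair (lp.single 1 i a) (lp.single 1 j b) := by
  refine teaPair_iff_forall_apply.2 fun k => ?_
  by_cases hki : k = i
  · subst hki
    rw [lp.single_apply_ne 1 j b hij]
    simp [TEAPair]
  · rw [lp.single_apply_ne 1 i a hki]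
    simp [TEAPair]

end TEAPair

section Matrix

variable {𝕜 : Type*} [NormedField 𝕜] {ι κ : Type*} [DecidableEq ι] {p q : ℝ≥0∞}
  [Fact (1 ≤ p)] [Fact (1 ≤ q)]

lemma apply_single_apply_eq_mul (T : lp (fun _ : ι => 𝕜) p →L[𝕜] lp (fun _ : κ => 𝕜) q)
    (β : ι) (c : 𝕜) (α : κ) : T (lp.single p β c) α = c * T (lp.single p β 1) α := by
  have hsingle : lp.single (E := fun _ : ι => 𝕜) p β c = c • lp.single p β (1 : 𝕜) := by
    rw [← lp.single_smul, smul_eq_mul, mul_one]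
  rw [hsingle, map_smul, lp.coeFn_smul, Pi.smul_apply, smul_eq_mul]

lemma hasSum_mul_apply_single_apply (hp : p ≠ ∞)
    (T : lp (fun _ : ι => 𝕜) p →L[𝕜] lp (fun _ : κ => 𝕜) q) (x : lp (fun _ : ι => 𝕜) p) (α : κ) :
    HasSum (fun β => x β * T (lp.single p β 1) α) (T x α) :=
  (((lp.evalCLM 𝕜 (fun _ : κ => 𝕜) q α).comp T).hasSum (lp.hasSum_single hp x)).congr_fun
    fun β => (apply_single_apply_eq_mul T β (x β) α).symm

lemma exists_forall_apply_eq_mul_of_row_subsingleton [Nonempty ι] (hp : p ≠ ∞)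
    (T : lp (fun _ : ι => 𝕜) p →L[𝕜] lp (fun _ : κ => 𝕜) q) (α : κ)
    (H : ∀ β β' : ι, T (lp.single p β 1) α ≠ 0 → T (lp.single p β' 1) α ≠ 0 → β = β') :
    ∃ β₀, ∀ x, T x α = x β₀ * T (lp.single p β₀ 1) α := by
  by_cases hrow : ∃ β₀, T (lp.single p β₀ 1) α ≠ 0
  · obtain ⟨β₀, hβ₀⟩ := hrow
    refine ⟨β₀, fun x => (hasSum_mul_apply_single_apply hp T x α).unique
      (hasSum_single β₀ fun β hβ => ?_)⟩
    by_contra hne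
    exact hβ (H β β₀ (right_ne_zero_of_mul hne) hβ₀)
  · push Not at hrow
    refine ⟨Classical.arbitrary ι, fun x => ?_⟩
    rw [hrow, mul_zero]
    exact (hasSum_mul_apply_single_apply hp T x α).unique (by simp [hrow])

end Matrix

end lp

/-- A bounded linear map `T` of `ℓ₁(Λ)` (`𝔽 = ℝ` or `ℂ`), with matrix entries
`t_{αβ} = (T e_β)_α`, preserves TEA pairs if and only if for each `α` there is at most
one `β` with `t_{αβ} ≠ 0`. -/
theorem l1_inf_TEA_preserver_iff {𝕜 : Type*} [RCLike 𝕜] {Λ : Type*} [DecidableEq Λ]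
    (T : lp (fun _ : Λ => 𝕜) 1 →L[𝕜] lp (fun _ : Λ => 𝕜) 1) :
    (∀ x y : lp (fun _ : Λ => 𝕜) 1, TEAPair x y → TEAPair (T x) (T y)) ↔
      ∀ α β β' : Λ,
        T (lp.single 1 β (1 : 𝕜)) α ≠ 0 → T (lp.single 1 β' (1 : 𝕜)) α ≠ 0 → β = β' := by
  constructor
  · intro hT α β β' hβ hβ'
    by_contra hne
    set c : 𝕜 := -T (lp.single 1 β 1) α / T (lp.single 1 β' 1) α
    have hα := lp.teaPair_iff_forall_apply.1 (hT _ _ (lp.teaPair_single_single hne 1 c)) α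
    refine hβ (hα.eq_zero_of_add_eq_zero ?_)
    rw [lp.apply_single_apply_eq_mul T β', div_mul_cancel₀ _ hβ', add_neg_cancel]
  · intro H x y hxy
    refine lp.teaPair_iff_forall_apply.2 fun α => ?_
    have : Nonempty Λ := ⟨α⟩
    obtain ⟨β₀, hβ₀⟩ :=
      lp.exists_forall_apply_eq_mul_of_row_subsingleton ENNReal.one_ne_top T α (H α)
    rw [hβ₀ x, hβ₀ y]
    exact (lp.teaPair_iff_forall_apply.1 hxy β₀).mul_right _
end

section
/- Let 𝔽 be ℝ or ℂ and let Λ be an infinite index set. If V is a linear subspace of ℓ∞(Λ) such that every two elements of V form a parallel pair with respect to the supremum norm, then V has dimension at most 1. -/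
open scoped ENNReal

section

variable {𝕜 : Type*} [RCLike 𝕜]

theorem norm_sub_add_norm_add_le {E : Type*} [NormedAddCommGroup E] [InnerProductSpace 𝕜 E]
    {u v : E} {r : ℝ} (hu : ‖u‖ ≤ 1) (hv : ‖v‖ ≤ 1) (huv : ‖u - v‖ ≤ r) (hr : r ≤ 2) :
    ‖u - v‖ + ‖u + v‖ ≤ r + 2 - r ^ 2 / 4 := by
  have hsum : ‖u + v‖ ^ 2 + ‖u - v‖ ^ 2 ≤ 4 := by
    rw [parallelogram_law_with_norm 𝕜 u v]
    nlinarith [norm_nonneg u, norm_nonneg v]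
  -- `4 (2 - b) ≥ 4 - b² ≥ a²` for `a = ‖u - v‖`, `b = ‖u + v‖`, and `t - t² / 4` increases on `[0, 2]`
  nlinarith [norm_nonneg (u - v), norm_nonneg (u + v), sq_nonneg (2 - ‖u + v‖)]

theorem lp_infty_norm_sub_add_smul_add_le {ι : Type*} {E : ι → Type*}
    [∀ i, NormedAddCommGroup (E i)] [∀ i, InnerProductSpace 𝕜 (E i)]
    {x y : lp E ∞} (hx : ‖x‖ ≤ 1) (hy : ‖y‖ ≤ 1) {σ : 𝕜} (hσ : ‖σ‖ = 1) :
    ‖(x - y) + σ • (x + y)‖ ≤ ‖x - y‖ + 2 - ‖x - y‖ ^ 2 / 4 := by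
  have hr : ‖x - y‖ ≤ 2 := (norm_sub_le x y).trans (by linarith)
  refine lp.norm_le_of_forall_le (by nlinarith [norm_nonneg (x - y)]) fun i => ?_
  have hcoord (f : lp E ∞) (i : ι) : ‖f i‖ ≤ ‖f‖ := lp.norm_apply_le_norm ENNReal.top_ne_zero f i
  calc ‖((x - y) + σ • (x + y)) i‖ = ‖(x i - y i) + σ • (x i + y i)‖ := rfl
    _ ≤ ‖x i - y i‖ + ‖x i + y i‖ := by
      grw [norm_add_le, norm_smul, hσ, one_mul]
    _ ≤ ‖x - y‖ + 2 - ‖x - y‖ ^ 2 / 4 :=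
      norm_sub_add_norm_add_le (𝕜 := 𝕜) ((hcoord x i).trans hx) ((hcoord y i).trans hy)
        (hcoord (x - y) i) hr

theorem lp_infty_eq_of_parallelPair_sub_add {ι : Type*} {E : ι → Type*}
    [∀ i, NormedAddCommGroup (E i)] [∀ i, InnerProductSpace 𝕜 (E i)]
    {x y : lp E ∞} (hx : ‖x‖ ≤ 1) (hy : ‖y‖ ≤ 1) (hxy : ‖x + y‖ = 2)
    (hpar : ParallelPair 𝕜 (x - y) (x + y)) : x = y := by
  obtain ⟨σ, hσ, hnorm⟩ := hpar
  have hle := lp_infty_norm_sub_add_smul_add_le hx hy hσ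
  rw [hnorm, hxy] at hle
  have : ‖x - y‖ = 0 := by nlinarith [norm_nonneg (x - y)]
  rwa [norm_eq_zero, sub_eq_zero] at this

theorem rank_le_one_of_forall_norm_eq_one {E : Type*} [NormedAddCommGroup E] [NormedSpace 𝕜 E]
    (h : ∀ x y : E, ‖x‖ = 1 → ‖y‖ = 1 → ∃ c : 𝕜, c • y = x) : Module.rank 𝕜 E ≤ 1 := by
  by_cases hunit : ∃ y : E, ‖y‖ = 1
  · obtain ⟨y, hy⟩ := hunit
    refine rank_le_one_iff.2 ⟨y, fun v => ?_⟩
    rcases eq_or_ne v 0 with rfl | hv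
    · exact ⟨0, zero_smul 𝕜 y⟩
    obtain ⟨c, hc⟩ := h _ y (norm_smul_inv_norm (𝕜 := 𝕜) hv) hy
    refine ⟨(‖v‖ : 𝕜) * c, ?_⟩
    rw [mul_smul, hc, smul_inv_smul₀ (RCLike.ofReal_ne_zero.2 (norm_ne_zero_iff.2 hv))]
  · push Not at hunit
    refine rank_le_one_iff.2 ⟨0, fun v => ⟨0, ?_⟩⟩
    by_contra hv
    exact hunit _ (norm_smul_inv_norm (𝕜 := 𝕜) (Ne.symm (by simpa using hv)))

end

theorem linfty_inf_pairwise_parallel_subspace_dim_le_one_general {𝕜 : Type*} [RCLike 𝕜]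
    {Λ : Type*} (V : Submodule 𝕜 (lp (fun _ : Λ => 𝕜) ∞))
    (h : ∀ x ∈ V, ∀ y ∈ V, ParallelPair 𝕜 x y) :
    Module.rank 𝕜 V ≤ 1 := by
  refine rank_le_one_of_forall_norm_eq_one fun x y hx hy => ?_
  obtain ⟨μ, hμ, hxy⟩ := h x x.2 y y.2
  have hμy : ‖μ • (y : lp (fun _ : Λ => 𝕜) ∞)‖ = 1 := by
    rw [norm_smul, hμ, one_mul]; exact hy
  have hμyV : μ • (y : lp (fun _ : Λ => 𝕜) ∞) ∈ V := V.smul_mem μ y.2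
  have hx_eq : (x : lp (fun _ : Λ => 𝕜) ∞) = μ • y :=
    lp_infty_eq_of_parallelPair_sub_add hx.le hμy.le
      (by rw [hxy, ← Submodule.coe_norm, ← Submodule.coe_norm, hx, hy]; norm_num)
      (h _ (V.sub_mem x.2 hμyV) _ (V.add_mem x.2 hμyV))
  exact ⟨μ, Subtype.ext hx_eq.symm⟩

/-- If `V` is a linear subspace of `ℓ∞(Λ)` (`Λ` an infinite index set, `𝔽 = ℝ` or `ℂ`)
in which any two elements are parallel with respect to the sup norm, then `dim V ≤ 1`. -/
theorem linfty_inf_pairwise_parallel_subspace_dim_le_one {𝕜 : Type*} [RCLike 𝕜]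
    {Λ : Type*} [Infinite Λ] (V : Submodule 𝕜 (lp (fun _ : Λ => 𝕜) ∞))
    (h : ∀ x ∈ V, ∀ y ∈ V, ParallelPair 𝕜 x y) :
    Module.rank 𝕜 V ≤ 1 :=
  linfty_inf_pairwise_parallel_subspace_dim_le_one_general V h
end
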